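/- arXiv:1911.07189 — 11 statements merged into one kernel-verified Lean document; each statement's English description precedes it below -/
import Mathlib

section
/- Let v ≡ 3 (mod 4) be a positive integer and let α, β be nonzero elements of Z_v. If an APS(v,α,β) exists, then, identifying α and β with integer representatives, 2α² − β² ≡ v/3 (mod v) when v ≡ 3 (mod 12), and 2α² − β² ≡ 0 (mod v) when v ≡ 7 or 11 (mod 12). -/
open scoped Classical

/-- `IsPPS A₁ A₂ S`: `S` is a partial partitionable set for the subsets `A₁`, `A₂`
of the abelian group `G`: the multiset of the four elements `x, -x, y, -y` over all
pairs `(x,y) ∈ S` covers each element of `G \ A₁` exactly once (and elements of `A₁`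
zero times), and the multiset of the four elements `x+y, -(x+y), x-y, -(x-y)` covers
each element of `G \ A₂` exactly once (and elements of `A₂` zero times). -/
def IsPPS {G : Type*} [AddCommGroup G] (A₁ A₂ : Set G) (S : Finset (G × G)) : Prop :=
  (∀ z : G, (S.val.bind fun p => ({p.1, -p.1, p.2, -p.2} : Multiset G)).count z
      = if z ∈ A₁ then 0 else 1) ∧
  (∀ z : G, (S.val.bind fun p =>
      ({p.1 + p.2, -(p.1 + p.2), p.1 - p.2, -(p.1 - p.2)} : Multiset G)).count z
      = if z ∈ A₂ then 0 else 1)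

/-- An almost partitionable set `APS(v, α, β)`. -/
def IsAPS (v : ℕ) (α β : ZMod v) (S : Finset (ZMod v × ZMod v)) : Prop :=
  IsPPS ({0, α, -α} : Set (ZMod v)) ({0, β, -β} : Set (ZMod v)) S

/-- A partitionable set `PS(v)`. -/
def IsPS (v : ℕ) (S : Finset (ZMod v × ZMod v)) : Prop :=
  IsPPS ({0} : Set (ZMod v)) ({0} : Set (ZMod v)) S


lemma six_sum_sq (n : ℕ) : 6 * (∑ i ∈ Finset.range n, i^2) = n*(n-1)*(2*n-1) := by
  induction n with
  | zero => simp
  | succ k ih =>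
    rw [Finset.sum_range_succ, Nat.mul_add, ih]
    cases k with
    | zero => simp
    | succ j =>
      have e2 : 2*(j+1) - 1 = 2*j+1 := by omega
      have e4 : 2*(j+1+1) - 1 = 2*j+3 := by omega
      simp only [Nat.succ_sub_one, e2, e4]; ring

lemma multiset_eq_filter_val {v : ℕ} [NeZero v] (A : Set (ZMod v)) (M : Multiset (ZMod v))
    (h : ∀ z, M.count z = if z ∈ A then 0 else 1) :
    M = (Finset.univ.filter (fun z => z ∉ A)).val := by
  refine Multiset.ext.mpr fun z => ?_
  rw [h z, Multiset.count_eq_of_nodup (Finset.univ.filter (fun z => z ∉ A)).nodup]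
  by_cases hz : z ∈ A <;> simp [hz]


theorem stmt0 (v : ℕ) (hv : v % 4 = 3) (α β : ZMod v) (hα : α ≠ 0) (hβ : β ≠ 0)
    (S : Finset (ZMod v × ZMod v)) (hS : IsAPS v α β S) :
    (v % 12 = 3 → 2 * α ^ 2 - β ^ 2 = ((v / 3 : ℕ) : ZMod v)) ∧
    ((v % 12 = 7 ∨ v % 12 = 11) → 2 * α ^ 2 - β ^ 2 = 0) := by
  haveI : NeZero v := ⟨by omega⟩
  obtain ⟨h1, h2⟩ := hS
  -- 2 is a unit
  have h2u : IsUnit (2 : ZMod v) := by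
    have hc : ((2:ℕ) : ZMod v) = 2 := by push_cast; ring
    rw [← hc, ZMod.isUnit_iff_coprime]
    exact (Nat.prime_two.coprime_iff_not_dvd).mpr (by omega)
  set T : ZMod v := ∑ z : ZMod v, z^2 with hTdef
  -- sum over the complement of {0,γ,-γ}
  have filt : ∀ (A : Set (ZMod v)) (γ : ZMod v), γ ≠ 0 →
      (∀ z : ZMod v, z ∈ A ↔ z = 0 ∨ z = γ ∨ z = -γ) →
      ∑ z ∈ Finset.univ.filter (fun z => z ∉ A), z^2 = T - 2*γ^2 := by
    intro A γ hγ hA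
    have hne : γ ≠ -γ := by
      intro h
      apply hγ
      have h2γ : (2:ZMod v) * γ = 2 * 0 := by
        rw [mul_zero, two_mul]; nth_rewrite 2 [h]; ring
      exact h2u.mul_left_cancel h2γ
    have hsplit := Finset.sum_filter_add_sum_filter_not Finset.univ
      (fun z => z ∈ A) (fun z => z^2)
    have hfe : Finset.univ.filter (fun z => z ∈ A) = ({0,γ,-γ} : Finset (ZMod v)) := by
      ext z
      simp only [Finset.mem_filter, Finset.mem_univ, true_and, hA z,
        Finset.mem_insert, Finset.mem_singleton]
    have hsum : ∑ z ∈ ({0,γ,-γ} : Finset (ZMod v)), z^2 = 2*γ^2 := by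
      have h0mem : (0:ZMod v) ∉ insert γ ({-γ} : Finset (ZMod v)) := by
        simp only [Finset.mem_insert, Finset.mem_singleton]
        push_neg
        exact ⟨fun h => hγ h.symm, fun h => hγ (neg_eq_zero.mp h.symm)⟩
      rw [show ({0,γ,-γ} : Finset (ZMod v)) = insert 0 (insert γ {-γ}) from rfl,
        Finset.sum_insert h0mem,
        Finset.sum_insert (by simp [hne]), Finset.sum_singleton]
      ring
    rw [hfe, hsum] at hsplit
    rw [hTdef]
    linear_combination hsplit
  have h1' : ∀ z : ZMod v, (S.val.bind fun p =>
      ({p.1, -p.1, p.2, -p.2} : Multiset (ZMod v))).count z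
      = @ite ℕ (z ∈ ({0, α, -α} : Set (ZMod v))) (Classical.propDecidable _) 0 1 := fun z => by
    convert h1 z using 2
  have h2' : ∀ z : ZMod v, (S.val.bind fun p =>
      ({p.1 + p.2, -(p.1 + p.2), p.1 - p.2, -(p.1 - p.2)} : Multiset (ZMod v))).count z
      = @ite ℕ (z ∈ ({0, β, -β} : Set (ZMod v))) (Classical.propDecidable _) 0 1 := fun z => by
    convert h2 z using 2
  have key1 := multiset_eq_filter_val _ _ h1'
  have key2 := multiset_eq_filter_val _ _ h2'
  have s1 : ((S.val.bind fun p => ({p.1, -p.1, p.2, -p.2} : Multiset (ZMod v))).map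
      (fun z => z^2)).sum = T - 2*α^2 := by
    rw [key1, ← filt _ α hα (fun z => Iff.rfl)]; rfl
  have s2 : ((S.val.bind fun p =>
      ({p.1 + p.2, -(p.1 + p.2), p.1 - p.2, -(p.1 - p.2)} : Multiset (ZMod v))).map
      (fun z => z^2)).sum = T - 2*β^2 := by
    rw [key2, ← filt _ β hβ (fun z => Iff.rfl)]; rfl
  set Q : ZMod v := (S.val.map fun p => p.1^2 + p.2^2).sum with hQdef
  have e1 : ((S.val.bind fun p => ({p.1, -p.1, p.2, -p.2} : Multiset (ZMod v))).map
      (fun z => z^2)).sum = 2 * Q := by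
    rw [Multiset.map_bind, Multiset.sum_bind, hQdef, ← Multiset.sum_map_mul_left]
    congr 1
    refine Multiset.map_congr rfl fun p _ => ?_
    simp only [Multiset.insert_eq_cons, Multiset.map_cons, Multiset.map_singleton,
      Multiset.sum_cons, Multiset.sum_singleton]
    ring
  have e2 : ((S.val.bind fun p =>
      ({p.1 + p.2, -(p.1 + p.2), p.1 - p.2, -(p.1 - p.2)} : Multiset (ZMod v))).map
      (fun z => z^2)).sum = 4 * Q := by
    rw [Multiset.map_bind, Multiset.sum_bind, hQdef, ← Multiset.sum_map_mul_left]
    congr 1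
    refine Multiset.map_congr rfl fun p _ => ?_
    simp only [Multiset.insert_eq_cons, Multiset.map_cons, Multiset.map_singleton,
      Multiset.sum_cons, Multiset.sum_singleton]
    ring
  rw [e1] at s1
  rw [e2] at s2
  have hkey : 2 * (2 * α ^ 2 - β ^ 2) = T := by linear_combination 2*s1 - s2
  -- compute T as a nat cast
  have hinj : ∀ a ∈ Finset.range v, ∀ b ∈ Finset.range v,
      ((a : ZMod v)) = (b : ZMod v) → a = b := by
    intro a ha b hb hab
    rw [Finset.mem_range] at ha hb
    have := congrArg ZMod.val hab
    rwa [ZMod.val_cast_of_lt ha, ZMod.val_cast_of_lt hb] at this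
  have himg : (Finset.range v).image (fun i : ℕ => (i : ZMod v)) = Finset.univ := by
    apply Finset.eq_univ_of_card
    rw [Finset.card_image_of_injOn fun a ha b hb => hinj a ha b hb,
      Finset.card_range, ZMod.card]
  have hT : T = ((∑ i ∈ Finset.range v, i^2 : ℕ) : ZMod v) := by
    rw [hTdef, ← himg, Finset.sum_image hinj, Nat.cast_sum]
    simp
  set N : ℕ := ∑ i ∈ Finset.range v, i^2 with hNdef
  have hN6 : 6 * N = v*(v-1)*(2*v-1) := six_sum_sq v
  constructor
  · intro h12
    obtain ⟨t, ht⟩ : ∃ t, v = 12*t+3 := ⟨v/12, by omega⟩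
    have hNval : N = v*(48*t^2+18*t+1) + 2*(4*t+1) := by
      have h6 : 6*N = 6*(v*(48*t^2+18*t+1) + 2*(4*t+1)) := by
        rw [hN6, show v - 1 = 12*t+2 by omega, show 2*v-1 = 24*t+5 by omega, ht]; ring
      exact Nat.eq_of_mul_eq_mul_left (by norm_num) h6
    have hTval : T = 2 * ((v/3 : ℕ) : ZMod v) := by
      rw [hT, hNval, show v/3 = 4*t+1 by omega]
      push_cast
      rw [show ((v:ZMod v)) = 0 from ZMod.natCast_self v]
      ring
    rw [hTval] at hkey
    exact h2u.mul_left_cancel hkey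
  · intro hcase
    have hcop : Nat.Coprime v 6 := by
      have c2 : Nat.Coprime v 2 :=
        ((Nat.prime_two.coprime_iff_not_dvd).mpr (by omega)).symm
      have c3 : Nat.Coprime v 3 :=
        ((Nat.prime_three.coprime_iff_not_dvd).mpr (by omega)).symm
      exact Nat.Coprime.mul_right c2 c3
    have hdvd : v ∣ N := by
      refine hcop.dvd_of_dvd_mul_left ?_
      exact ⟨(v-1)*(2*v-1), by rw [hN6]; ring⟩
    have hTval : T = 0 := by
      rw [hT, ZMod.natCast_eq_zero_iff]; exact hdvd
    rw [hTval] at hkey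
    have : (2 : ZMod v) * (2*α^2 - β^2) = 2 * 0 := by rw [hkey, mul_zero]
    exact h2u.mul_left_cancel this
end

section
/- Let v ≡ 3 (mod 12) with v = 3·p₁·p₂·…·p_s, where p₁,…,p_s are pairwise distinct primes each congruent to 3 or −3 modulo 8. If an APS(v,α,β) exists for nonzero α, β ∈ Z_v, then both α and β belong to {v/3, 2v/3} (as elements of Z_v). -/
open scoped Classical

/-- Closed form for six times the sum of the first squares, over `ℤ`. -/
lemma six_mul_sum_range_sq (n : ℕ) :
    6 * ∑ k ∈ Finset.range n, (k : ℤ) ^ 2 = n * (n - 1) * (2 * n - 1) := by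
  induction n with
  | zero => simp
  | succ n ih =>
    rw [Finset.sum_range_succ, mul_add]
    push_cast
    linear_combination ih

/-- If a multiset has count `0` on the three distinct elements `a, b, c` and count `1`
elsewhere, then the sum of `f` over it is the full sum minus `f a + f b + f c`. -/
lemma sum_map_of_covered {v : ℕ} [NeZero v] (M : Multiset (ZMod v)) (a b c : ZMod v)
    (hab : a ≠ b) (hac : a ≠ c) (hbc : b ≠ c)
    (h : ∀ z : ZMod v, M.count z = if z ∈ ({a, b, c} : Set (ZMod v)) then 0 else 1)
    (f : ZMod v → ZMod v) :
    (M.map f).sum = (∑ z : ZMod v, f z) - f a - f b - f c := by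
  have hmem : ∀ z : ZMod v, z ∈ (Finset.univ \ ({a, b, c} : Finset (ZMod v))).val ↔
      ¬(z = a ∨ z = b ∨ z = c) := by
    intro z
    rw [Finset.mem_val, Finset.mem_sdiff]
    simp
  have hM : M = (Finset.univ \ ({a, b, c} : Finset (ZMod v))).val := by
    ext z
    rw [h z, Multiset.count_eq_of_nodup (Finset.nodup _)]
    by_cases hz : z = a ∨ z = b ∨ z = c
    · rw [if_pos (by simpa using hz), if_neg (fun hc => ((hmem z).mp hc) hz)]
    · rw [if_neg (by simpa using hz), if_pos ((hmem z).mpr hz)]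
  have hsum : (M.map f).sum = ∑ z ∈ Finset.univ \ ({a, b, c} : Finset (ZMod v)), f z := by
    rw [hM, Finset.sum_eq_multiset_sum]
  rw [hsum, Finset.sum_sdiff_eq_sub (Finset.subset_univ _)]
  rw [show ({a, b, c} : Finset (ZMod v)) = insert a (insert b {c}) from rfl,
    Finset.sum_insert (by simp [hab, hac]), Finset.sum_insert (by simp [hbc]),
    Finset.sum_singleton]
  ring

theorem stmt1 (v : ℕ) (hv : v % 12 = 3) (P : Finset ℕ)
    (hP : ∀ p ∈ P, Nat.Prime p ∧ (p % 8 = 3 ∨ p % 8 = 5))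
    (hfac : v = 3 * ∏ p ∈ P, p)
    (α β : ZMod v) (hα : α ≠ 0) (hβ : β ≠ 0)
    (S : Finset (ZMod v × ZMod v)) (hS : IsAPS v α β S) :
    (α = ((v / 3 : ℕ) : ZMod v) ∨ α = ((2 * v / 3 : ℕ) : ZMod v)) ∧
    (β = ((v / 3 : ℕ) : ZMod v) ∨ β = ((2 * v / 3 : ℕ) : ZMod v)) := by
  haveI : NeZero v := ⟨by omega⟩
  obtain ⟨h1, h2⟩ := hS
  -- 2 is a unit of `ZMod v`
  have h2unit : IsUnit (2 : ZMod v) := by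
    rw [show ((2 : ZMod v)) = ((2 : ℕ) : ZMod v) by push_cast; ring,
      ZMod.isUnit_iff_coprime]
    exact (Nat.prime_two.coprime_iff_not_dvd).mpr (by omega)
  have hdouble : ∀ γ : ZMod v, γ ≠ 0 → γ ≠ -γ := by
    intro γ hγ hcon
    apply hγ
    have h0 : (2 : ZMod v) * γ = 0 := by
      linear_combination hcon
    exact (h2unit.mul_right_eq_zero).mp h0
  -- bridge decidability instances
  have h1' : ∀ z : ZMod v, (S.val.bind fun p =>
      ({p.1, -p.1, p.2, -p.2} : Multiset (ZMod v))).count z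
      = if z ∈ ({0, α, -α} : Set (ZMod v)) then 0 else 1 := by
    intro z; convert h1 z using 2
  have h2' : ∀ z : ZMod v, (S.val.bind fun p =>
      ({p.1 + p.2, -(p.1 + p.2), p.1 - p.2, -(p.1 - p.2)} : Multiset (ZMod v))).count z
      = if z ∈ ({0, β, -β} : Set (ZMod v)) then 0 else 1 := by
    intro z; convert h2 z using 2
  -- the two sum-of-squares identities
  have E1 := sum_map_of_covered _ 0 α (-α) (Ne.symm hα)
    (fun h0 => hα (by simpa using h0.symm)) (hdouble α hα) h1' (fun z => z ^ 2)
  have E2 := sum_map_of_covered _ 0 β (-β) (Ne.symm hβ)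
    (fun h0 => hβ (by simpa using h0.symm)) (hdouble β hβ) h2' (fun z => z ^ 2)
  set T : ZMod v := ∑ z : ZMod v, z ^ 2 with hT
  -- rewrite the left-hand sides as sums over S
  have L1 : ((S.val.bind fun p => ({p.1, -p.1, p.2, -p.2} : Multiset (ZMod v))).map
      (fun z => z ^ 2)).sum = ∑ p ∈ S, (2 * p.1 ^ 2 + 2 * p.2 ^ 2) := by
    rw [Multiset.map_bind, Multiset.sum_bind, Finset.sum_eq_multiset_sum]
    congr 1
    apply Multiset.map_congr rfl
    intro p _
    simp only [Multiset.insert_eq_cons, Multiset.map_cons, Multiset.sum_cons,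
      Multiset.map_singleton, Multiset.sum_singleton]
    ring
  have L2 : ((S.val.bind fun p => ({p.1 + p.2, -(p.1 + p.2), p.1 - p.2, -(p.1 - p.2)} :
      Multiset (ZMod v))).map (fun z => z ^ 2)).sum
      = ∑ p ∈ S, (2 * (2 * p.1 ^ 2 + 2 * p.2 ^ 2)) := by
    rw [Multiset.map_bind, Multiset.sum_bind, Finset.sum_eq_multiset_sum]
    congr 1
    apply Multiset.map_congr rfl
    intro p _
    simp only [Multiset.insert_eq_cons, Multiset.map_cons, Multiset.sum_cons,
      Multiset.map_singleton, Multiset.sum_singleton]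
    ring
  rw [L1] at E1
  rw [L2, ← Finset.mul_sum] at E2
  -- key identity in ZMod v
  have key : 4 * α ^ 2 - 2 * β ^ 2 = T := by
    rw [E1] at E2
    linear_combination -E2
  -- express T as a cast of an integer
  set N : ℤ := ∑ k ∈ Finset.range v, (k : ℤ) ^ 2 with hN
  have hTN : T = ((N : ℤ) : ZMod v) := by
    rw [hT, hN]
    push_cast
    apply Finset.sum_bij' (fun (z : ZMod v) _ => z.val) (fun (k : ℕ) _ => (k : ZMod v))
    · intro a _; exact Finset.mem_range.mpr (ZMod.val_lt a)
    · intro k _; exact Finset.mem_univ _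
    · intro a _; exact ZMod.natCast_zmod_val a
    · intro k hk; exact ZMod.val_cast_of_lt (Finset.mem_range.mp hk)
    · intro a _; rw [ZMod.natCast_zmod_val a]
  -- integer divisibility
  have hdvdv : (v : ℤ) ∣ (4 * (α.val : ℤ) ^ 2 - 2 * (β.val : ℤ) ^ 2 - N) := by
    rw [← ZMod.intCast_zmod_eq_zero_iff_dvd]
    push_cast
    rw [ZMod.natCast_zmod_val α, ZMod.natCast_zmod_val β]
    rw [hTN] at key
    linear_combination key
  -- per-prime conclusion
  have hprime : ∀ p ∈ P, p ∣ α.val ∧ p ∣ β.val := by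
    intro p hp
    obtain ⟨hpp, hp8⟩ := hP p hp
    haveI : Fact p.Prime := ⟨hpp⟩
    have hpprime : Prime (p : ℤ) := Nat.prime_iff_prime_int.mp hpp
    have hpv : (p : ℕ) ∣ v := hfac ▸ Dvd.dvd.mul_left (Finset.dvd_prod_of_mem _ hp) 3
    have hp2 : p ≠ 2 := by rcases hp8 with h | h <;> omega
    have hp6N : (p : ℤ) ∣ 6 * N := by
      rw [six_mul_sum_range_sq v]
      exact Dvd.dvd.mul_right (Dvd.dvd.mul_right (Int.natCast_dvd_natCast.mpr hpv) _) _
    have hpN : (p : ℤ) ∣ N := by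
      by_cases hp3 : p = 3
      · -- here 3 ∈ P so 9 ∣ v
        subst hp3
        have h9 : (9 : ℤ) ∣ (v : ℤ) := by
          have h3 : (3 : ℕ) ∣ ∏ p ∈ P, p := Finset.dvd_prod_of_mem _ hp
          obtain ⟨t, ht⟩ := h3
          have : v = 9 * t := by rw [hfac, ht]; ring
          exact ⟨(t : ℤ), by exact_mod_cast this⟩
        have h9' : (9 : ℤ) ∣ 6 * N := by
          rw [six_mul_sum_range_sq v]
          exact Dvd.dvd.mul_right (Dvd.dvd.mul_right h9 _) _
        obtain ⟨t, ht⟩ := h9'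
        have h2N : 2 * N = 3 * t := by linarith
        have : (3 : ℤ) ∣ 2 * N := Dvd.intro t h2N.symm
        rcases (Int.Prime.dvd_mul' (by norm_num) this) with h | h
        · norm_num at h
        · exact_mod_cast h
      · rcases hpprime.dvd_mul.mp hp6N with h | h
        · exfalso
          have h6 : (p : ℕ) ∣ 2 * 3 := by
            have := Int.natCast_dvd_natCast.mp (by exact_mod_cast h : ((p:ℕ):ℤ) ∣ ((6:ℕ):ℤ))
            simpa using this
          rcases (Nat.Prime.dvd_mul hpp).mp h6 with hd | hd
          · exact hp2 ((Nat.prime_dvd_prime_iff_eq hpp Nat.prime_two).mp hd)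
          · exact hp3 ((Nat.prime_dvd_prime_iff_eq hpp Nat.prime_three).mp hd)
        · exact h
    have hpq : (p : ℤ) ∣ (4 * (α.val : ℤ) ^ 2 - 2 * (β.val : ℤ) ^ 2) := by
      have h1' : (p : ℤ) ∣ (4 * (α.val : ℤ) ^ 2 - 2 * (β.val : ℤ) ^ 2 - N) :=
        dvd_trans (Int.natCast_dvd_natCast.mpr hpv) hdvdv
      have := dvd_add h1' hpN
      simpa using this
    -- move to ZMod p
    have hc : ((4 * (α.val : ℤ) ^ 2 - 2 * (β.val : ℤ) ^ 2 : ℤ) : ZMod p) = 0 :=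
      (ZMod.intCast_zmod_eq_zero_iff_dvd _ p).mpr hpq
    push_cast at hc
    set A : ZMod p := ((α.val : ℕ) : ZMod p) with hA
    set B : ZMod p := ((β.val : ℕ) : ZMod p) with hB
    have h2p : (2 : ZMod p) ≠ 0 := by
      rw [show ((2 : ZMod p)) = ((2 : ℕ) : ZMod p) by push_cast; ring,
        Ne, ZMod.natCast_eq_zero_iff]
      intro hd
      have := (Nat.prime_dvd_prime_iff_eq hpp Nat.prime_two).mp hd
      exact hp2 this
    have hsq : B ^ 2 = 2 * A ^ 2 := by
      have h4 : (2 : ZMod p) * (2 * A ^ 2 - B ^ 2) = 0 := by linear_combination hc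
      rcases mul_eq_zero.mp h4 with h | h
      · exact absurd h h2p
      · linear_combination -h
    by_cases hA0 : A = 0
    · refine ⟨(ZMod.natCast_eq_zero_iff _ _).mp hA0, ?_⟩
      apply (ZMod.natCast_eq_zero_iff _ _).mp
      have hB2 : B ^ 2 = 0 := by rw [hsq, hA0]; ring
      exact pow_eq_zero_iff (n := 2) (by norm_num) |>.mp hB2
    · exfalso
      have hsq2 : IsSquare (2 : ZMod p) := by
        refine ⟨B * A⁻¹, ?_⟩
        have hAinv : A * A⁻¹ = 1 := mul_inv_cancel₀ hA0
        linear_combination (-(A⁻¹ * A⁻¹)) * hsq + (-2 * (A * A⁻¹ + 1)) * hAinv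
      rw [ZMod.exists_sq_eq_two_iff hp2] at hsq2
      rcases hp8 with h | h <;> rcases hsq2 with h' | h' <;> omega
  -- conclude
  set m : ℕ := ∏ p ∈ P, p with hm
  have hmα : m ∣ α.val := Finset.prod_primes_dvd _
    (fun p hp => (hP p hp).1.prime) (fun p hp => (hprime p hp).1)
  have hmβ : m ∣ β.val := Finset.prod_primes_dvd _
    (fun p hp => (hP p hp).1.prime) (fun p hp => (hprime p hp).2)
  have hv3 : v = 3 * m := hfac
  have hfin : ∀ γ : ZMod v, γ ≠ 0 → m ∣ γ.val →
      (γ = ((v / 3 : ℕ) : ZMod v) ∨ γ = ((2 * v / 3 : ℕ) : ZMod v)) := by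
    intro γ hγ hmγ
    obtain ⟨k, hk⟩ := hmγ
    have hlt : γ.val < v := ZMod.val_lt γ
    have hne : γ.val ≠ 0 := fun h => hγ ((ZMod.val_eq_zero γ).mp h)
    have hm0 : 0 < m := by
      rcases Nat.eq_zero_or_pos m with h | h
      · omega
      · exact h
    have hk3 : k < 3 := by
      by_contra hk3
      push_neg at hk3
      have : m * 3 ≤ m * k := Nat.mul_le_mul_left m hk3
      omega
    have hk0 : k ≠ 0 := by rintro rfl; omega
    have hγval : γ = ((γ.val : ℕ) : ZMod v) := (ZMod.natCast_zmod_val γ).symm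
    have hk12 : k = 1 ∨ k = 2 := by omega
    rcases hk12 with rfl | rfl
    · left
      rw [hγval, hk, show v / 3 = m by omega]
      norm_num
    · right
      rw [hγval, hk, show 2 * v / 3 = m * 2 by omega]
  exact ⟨hfin α hα hmα, hfin β hβ hmβ⟩
end

section
/- Let v ≡ 3 (mod 12) with v = 3^{2a}·v₁, where a ≥ 1 is an integer and v₁ is a positive integer not divisible by 3. Then there is no APS(v,α,β) for any nonzero α, β ∈ Z_v. -/
open scoped Classical

lemma aps_sq_sum_formula (n : ℕ) : 6 * ∑ i ∈ Finset.range n, i^2 + 3*n^2 = 2*n^3 + n := by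
  induction n with
  | zero => simp
  | succ m ih =>
      rw [Finset.sum_range_succ, Nat.mul_add]
      zify at ih ⊢
      linear_combination ih

lemma aps_L0 (A B : ℤ) (h : (3:ℤ) ∣ 4*A^2-2*B^2) : 3 ∣ A ∧ 3 ∣ B := by
  have key : ∀ x y : ZMod 3, 4*x^2-2*y^2 = 0 → x = 0 ∧ y = 0 := by decide
  have h' : ((4*A^2-2*B^2 : ℤ) : ZMod 3) = 0 := by
    exact_mod_cast (ZMod.intCast_zmod_eq_zero_iff_dvd _ 3).mpr h
  push_cast at h'
  obtain ⟨h1, h2⟩ := key _ _ h'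
  constructor
  · exact_mod_cast (ZMod.intCast_zmod_eq_zero_iff_dvd A 3).mp h1
  · exact_mod_cast (ZMod.intCast_zmod_eq_zero_iff_dvd B 3).mp h2

lemma aps_Lmain (m : ℕ) : ∀ A B : ℤ, (3:ℤ)^(2*m+1) ∣ 4*A^2-2*B^2 → (3:ℤ)^(2*m+2) ∣ 4*A^2-2*B^2 := by
  induction m with
  | zero =>
      intro A B h
      have h3 : (3:ℤ) ∣ 4*A^2-2*B^2 := by simpa using h
      obtain ⟨⟨A', rfl⟩, ⟨B', rfl⟩⟩ := aps_L0 A B h3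
      exact ⟨4*A'^2-2*B'^2, by ring⟩
  | succ m ih =>
      intro A B h
      have h3 : (3:ℤ) ∣ 4*A^2-2*B^2 := dvd_trans (dvd_pow_self 3 (by omega)) h
      obtain ⟨⟨A', rfl⟩, ⟨B', rfl⟩⟩ := aps_L0 A B h3
      have hD : 4*(3*A')^2-2*(3*B')^2 = 9*(4*A'^2-2*B'^2) := by ring
      rw [hD] at h ⊢
      have h9 : (9:ℤ) * 3^(2*m+1) ∣ 9*(4*A'^2-2*B'^2) := by
        have e : (3:ℤ)^(2*(m+1)+1) = 9 * 3^(2*m+1) := by ring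
        rwa [e] at h
      have h' : (3:ℤ)^(2*m+1) ∣ 4*A'^2-2*B'^2 :=
        (mul_dvd_mul_iff_left (by norm_num : (9:ℤ) ≠ 0)).mp h9
      have e : (3:ℤ)^(2*(m+1)+2) = 9 * 3^(2*m+2) := by ring
      rw [e]
      exact mul_dvd_mul_left 9 (ih A' B' h')

lemma aps_multiset_eq_compl {G : Type*} [Fintype G] [DecidableEq G] (M : Multiset G)
    (A : Finset G) (h : ∀ z, M.count z = if z ∈ A then 0 else 1) :
    M = (Finset.univ \ A).val := by
  refine Multiset.ext.mpr fun z => ?_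
  rw [h z, Multiset.count_eq_of_nodup (Finset.univ \ A).nodup]
  simp only [Finset.mem_val, Finset.mem_sdiff, Finset.mem_univ, true_and]
  by_cases hz : z ∈ A <;> simp [hz]

lemma aps_zmod_sum_eq {v : ℕ} [NeZero v] (f : ZMod v → ZMod v) :
    ∑ z : ZMod v, f z = ∑ i ∈ Finset.range v, f (i : ZMod v) := by
  refine Finset.sum_bij (fun (z : ZMod v) _ => z.val) (fun z _ => Finset.mem_range.mpr z.val_lt)
    (fun z _ z' _ h => ?_) (fun i hi => ⟨(i : ZMod v), Finset.mem_univ _, ?_⟩) (fun z _ => ?_)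
  · exact ZMod.val_injective _ h
  · exact ZMod.val_cast_of_lt (Finset.mem_range.mp hi)
  · rw [ZMod.natCast_rightInverse z]

theorem stmt2 (v a v₁ : ℕ) (hv : v % 12 = 3) (ha : 1 ≤ a) (hv₁ : 0 < v₁)
    (h3 : ¬ (3 ∣ v₁)) (hfac : v = 3 ^ (2 * a) * v₁)
    (α β : ZMod v) (hα : α ≠ 0) (hβ : β ≠ 0) (S : Finset (ZMod v × ZMod v)) :
    ¬ IsAPS v α β S := by
  intro hAPS
  haveI : NeZero v := ⟨by omega⟩
  obtain ⟨h1, h2⟩ := hAPS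
  have instEq : (fun a b => Classical.propDecidable (a = b) : DecidableEq (ZMod v))
      = ZMod.decidableEq v := Subsingleton.elim _ _
  rw [instEq] at h1 h2
  -- 2 is a unit in ZMod v
  have h2unit : IsUnit (2 : ZMod v) := by
    have hcop : Nat.Coprime 2 v :=
      (Nat.Prime.coprime_iff_not_dvd Nat.prime_two).mpr (by omega)
    have := (ZMod.isUnit_iff_coprime 2 v).mpr hcop
    simpa using this
  have hne : ∀ γ : ZMod v, γ ≠ 0 → γ ≠ -γ := by
    intro γ hγ h
    apply hγ
    have h20 : (2 : ZMod v) * γ = 0 := by linear_combination h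
    exact (IsUnit.mul_right_eq_zero h2unit).mp h20
  set T : ZMod v := ∑ z : ZMod v, z^2 with hTdef
  -- sum over the exceptional sets
  have hsumA : ∀ γ : ZMod v, γ ≠ 0 →
      ∑ z ∈ ({0, γ, -γ} : Finset (ZMod v)), z^2 = 2*γ^2 := by
    intro γ hγ
    have h0 : (0 : ZMod v) ∉ ({γ, -γ} : Finset (ZMod v)) := by
      simp only [Finset.mem_insert, Finset.mem_singleton]
      push_neg
      constructor
      · exact fun h => hγ h.symm
      · intro h; exact hγ (by simpa using h.symm)
    have hg : γ ∉ ({-γ} : Finset (ZMod v)) := by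
      simpa using hne γ hγ
    rw [Finset.sum_insert h0, Finset.sum_insert hg, Finset.sum_singleton]
    ring
  -- step A: extract square sums
  have step : ∀ (f : ZMod v × ZMod v → Multiset (ZMod v)) (γ : ZMod v), γ ≠ 0 →
      (∀ z : ZMod v, (S.val.bind f).count z
        = if z ∈ ({0, γ, -γ} : Set (ZMod v)) then 0 else 1) →
      (S.val.map fun p => ((f p).map (fun z => z^2)).sum).sum = T - 2*γ^2 := by
    intro f γ hγ hcount
    have hM : S.val.bind f = (Finset.univ \ ({0, γ, -γ} : Finset (ZMod v))).val := by
      refine aps_multiset_eq_compl _ _ fun z => ?_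
      rw [hcount z]
      exact if_congr (by simp) rfl rfl
    have e1 : (S.val.map fun p => ((f p).map (fun z => z^2)).sum).sum
        = (Multiset.map (fun z => z^2) (S.val.bind f)).sum := by
      rw [Multiset.map_bind, Multiset.sum_bind]
    rw [e1, hM]
    have e2 : (Multiset.map (fun z => z^2)
          (Finset.univ \ ({0, γ, -γ} : Finset (ZMod v))).val).sum
        = ∑ z ∈ Finset.univ \ ({0, γ, -γ} : Finset (ZMod v)), z^2 := rfl
    rw [e2, Finset.sum_sdiff_eq_sub (Finset.subset_univ _), hsumA γ hγ]
  have h1' : ∀ z : ZMod v, (S.val.bind fun p =>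
      ({p.1, -p.1, p.2, -p.2} : Multiset (ZMod v))).count z
      = if z ∈ ({0, α, -α} : Set (ZMod v)) then 0 else 1 := by
    intro z; rw [h1 z]; congr!
  have h2' : ∀ z : ZMod v, (S.val.bind fun p =>
      ({p.1 + p.2, -(p.1 + p.2), p.1 - p.2, -(p.1 - p.2)} : Multiset (ZMod v))).count z
      = if z ∈ ({0, β, -β} : Set (ZMod v)) then 0 else 1 := by
    intro z; rw [h2 z]; congr!
  have E1 := step _ α hα h1'
  have E2 := step _ β hβ h2' 
  -- per-pair simplification
  have e1' : (S.val.map fun p : ZMod v × ZMod v =>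
        (({p.1, -p.1, p.2, -p.2} : Multiset (ZMod v)).map (fun z => z^2)).sum).sum
      = (S.val.map fun p : ZMod v × ZMod v => 2*p.1^2 + 2*p.2^2).sum := by
    refine congrArg Multiset.sum (Multiset.map_congr rfl fun p _ => ?_)
    simp only [Multiset.insert_eq_cons, Multiset.map_cons, Multiset.map_singleton,
      Multiset.sum_cons, Multiset.sum_singleton]
    ring
  have e2' : (S.val.map fun p : ZMod v × ZMod v =>
        (({p.1 + p.2, -(p.1 + p.2), p.1 - p.2, -(p.1 - p.2)} : Multiset (ZMod v)).map
          (fun z => z^2)).sum).sum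
      = (S.val.map fun p : ZMod v × ZMod v => 2*(2*p.1^2 + 2*p.2^2)).sum := by
    refine congrArg Multiset.sum (Multiset.map_congr rfl fun p _ => ?_)
    simp only [Multiset.insert_eq_cons, Multiset.map_cons, Multiset.map_singleton,
      Multiset.sum_cons, Multiset.sum_singleton]
    ring
  rw [e1'] at E1
  rw [e2', Multiset.sum_map_mul_left, E1] at E2
  -- key identity in ZMod v
  have key : T = 4*α^2 - 2*β^2 := by linear_combination E2
  -- compute T as a cast
  set N : ℕ := ∑ i ∈ Finset.range v, i^2 with hNdef
  have hT : T = (N : ZMod v) := by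
    rw [hTdef, aps_zmod_sum_eq (fun z => z^2), hNdef]
    push_cast
    rfl
  -- lift to the integers
  set A : ℤ := (α.val : ℤ) with hAdef
  set B : ℤ := (β.val : ℤ) with hBdef
  have hcastA : ((A : ℤ) : ZMod v) = α := by
    rw [hAdef]; push_cast; exact ZMod.natCast_rightInverse α
  have hcastB : ((B : ℤ) : ZMod v) = β := by
    rw [hBdef]; push_cast; exact ZMod.natCast_rightInverse β
  have main0 : ((4*A^2 - 2*B^2 - (N:ℤ) : ℤ) : ZMod v) = 0 := by
    push_cast [hcastA, hcastB]
    rw [hT] at key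
    linear_combination -key
  obtain ⟨k, hk⟩ := (ZMod.intCast_zmod_eq_zero_iff_dvd _ v).mp main0
  -- integer arithmetic: 6N = 2v^3 - 3v^2 + v
  have hNform : 6*(N:ℤ) = 2*(v:ℤ)^3 - 3*(v:ℤ)^2 + (v:ℤ) := by
    have := aps_sq_sum_formula v
    rw [← hNdef] at this
    zify at this
    linarith
  -- 2*N = 3^(2a-1) * M with 3 ∤ M
  set M : ℤ := (v₁:ℤ) * ((v:ℤ) - 1) * (2*(v:ℤ) - 1) with hMdef
  have hvint : (v:ℤ) = 3^(2*a) * (v₁:ℤ) := by exact_mod_cast hfac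
  have h2N : 2*(N:ℤ) = 3^(2*a-1) * M := by
    have h6N : 6*(N:ℤ) = 3 * (3^(2*a-1) * M) := by
      rw [hNform, hMdef, hvint]
      have e : (3:ℤ) * 3^(2*a-1) = 3^(2*a) := by
        rw [← pow_succ']
        congr 1
        omega
      rw [← hvint]
      rw [show (3:ℤ) * (3^(2*a-1) * ((v₁:ℤ) * ((v:ℤ)-1) * (2*(v:ℤ)-1)))
          = (3 * 3^(2*a-1)) * (v₁:ℤ) * (((v:ℤ)-1) * (2*(v:ℤ)-1)) by ring, e, ← hvint]
      ring
    have : (3:ℤ) * (2*(N:ℤ)) = 3 * (3^(2*a-1) * M) := by linarith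
    exact mul_left_cancel₀ (by norm_num) this
  have h3M : ¬ (3:ℤ) ∣ M := by
    intro hdvd
    have hp3 : Prime (3:ℤ) := Int.prime_three
    rcases hp3.dvd_mul.mp hdvd with h' | h'
    · rcases hp3.dvd_mul.mp h' with h'' | h''
      · exact h3 (by exact_mod_cast h'')
      · have hv3 : v % 3 = 0 := by omega
        omega
    · have hv3 : v % 3 = 0 := by omega
      omega
  -- 3^(2a-1) ∣ N, but not 3^(2a)
  have hNdvd : (3:ℤ)^(2*a-1) ∣ (N:ℤ) := by
    have hco : IsCoprime ((3:ℤ)^(2*a-1)) 2 := by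
      apply IsCoprime.pow_left
      rw [Int.isCoprime_iff_gcd_eq_one]
      norm_num
    exact hco.dvd_of_dvd_mul_left ⟨M, by linarith [h2N]⟩
  have hNnotdvd : ¬ (3:ℤ)^(2*a) ∣ (N:ℤ) := by
    intro hdvd
    have h1 : (3:ℤ)^(2*a) ∣ 2*(N:ℤ) := Dvd.dvd.mul_left hdvd 2
    rw [h2N] at h1
    have e : (3:ℤ)^(2*a) = 3^(2*a-1) * 3 := by
      rw [← pow_succ]; congr 1; omega
    rw [e] at h1
    have h3dM : (3:ℤ) ∣ M := by
      have := (mul_dvd_mul_iff_left (a := (3:ℤ)^(2*a-1))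
        (pow_ne_zero _ (by norm_num))).mp h1
      exact this
    exact h3M h3dM
  -- the contradiction
  have hvdvd : (3:ℤ)^(2*a-1) ∣ (v:ℤ) := by
    rw [hvint]
    refine Dvd.dvd.mul_right ?_ _
    exact pow_dvd_pow 3 (by omega)
  have hDdvd : (3:ℤ)^(2*(a-1)+1) ∣ 4*A^2 - 2*B^2 := by
    have e : 2*(a-1)+1 = 2*a-1 := by omega
    rw [e]
    have : 4*A^2 - 2*B^2 = (N:ℤ) + (v:ℤ)*k := by linarith [hk]
    rw [this]
    exact dvd_add hNdvd (Dvd.dvd.mul_right hvdvd k)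
  have hDdvd2 := aps_Lmain (a-1) A B hDdvd
  have e2a : 2*(a-1)+2 = 2*a := by omega
  rw [e2a] at hDdvd2
  apply hNnotdvd
  have : (N:ℤ) = (4*A^2 - 2*B^2) - (v:ℤ)*k := by linarith [hk]
  rw [this]
  have hvd2 : (3:ℤ)^(2*a) ∣ (v:ℤ) := by
    rw [hvint]
    exact Dvd.dvd.mul_right (dvd_refl _) _
  exact dvd_sub hDdvd2 (dvd_mul_of_dvd_left hvd2 k)
end

section
/- Let v ≡ 15 (mod 36) with v = 3·p₁·p₂·…·p_s, where p₁,…,p_s are pairwise distinct primes each congruent to 3 or −3 modulo 8. Then there is no APS(v,α,β) for any nonzero α, β ∈ Z_v. -/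
open scoped Classical

/-- `6·(∑_{j<n} j²) + 3n² = 2n³ + n`. -/
lemma aux_sum_sq (n : ℕ) :
    6 * (∑ j ∈ Finset.range n, j ^ 2) + 3 * n ^ 2 = 2 * n ^ 3 + n := by
  induction n with
  | zero => simp
  | succ n ih =>
    rw [Finset.sum_range_succ]
    nlinarith [ih]

lemma aux_multiset_sum {G : Type*} [Fintype G] [DecidableEq G] (M : Multiset G)
    {R : Type*} [AddCommMonoid R] (f : G → R) :
    (M.map f).sum = ∑ z : G, M.count z • f z := by
  rw [Finset.sum_multiset_map_count]
  apply Finset.sum_subset (Finset.subset_univ _)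
  intro z _ hz
  rw [Multiset.count_eq_zero_of_notMem (by simpa using hz), zero_smul]

lemma aux_cover_sum {v : ℕ} [NeZero v] (M : Multiset (ZMod v)) (γ : ZMod v)
    (hγ0 : γ ≠ 0) (hγ : γ ≠ -γ)
    (h : ∀ z : ZMod v, M.count z
      = @ite ℕ (z ∈ ({0, γ, -γ} : Set (ZMod v))) (Classical.propDecidable _) 0 1) :
    (M.map (· ^ 2)).sum = (∑ z : ZMod v, z ^ 2) - 2 * γ ^ 2 := by
  rw [aux_multiset_sum]
  have h1 : ∀ z : ZMod v, M.count z • z ^ 2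
      = z ^ 2 - (@ite (ZMod v) (z ∈ ({0, γ, -γ} : Set (ZMod v)))
          (Classical.propDecidable _) (z ^ 2) 0) := by
    intro z
    rw [h z]
    split <;> simp
  rw [Finset.sum_congr rfl fun z _ => h1 z, Finset.sum_sub_distrib]
  congr 1
  rw [show (fun z : ZMod v => @ite (ZMod v) (z ∈ ({0, γ, -γ} : Set (ZMod v)))
        (Classical.propDecidable _) (z ^ 2) 0)
      = (fun z : ZMod v => if z ∈ ({0, γ, -γ} : Set (ZMod v)) then z ^ 2 else 0) from by
    funext z; congr 1]
  rw [← Finset.sum_filter]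
  have hfil : Finset.univ.filter (fun z => z ∈ ({0, γ, -γ} : Set (ZMod v)))
      = ({0, γ, -γ} : Finset (ZMod v)) := by
    ext z; simp [Set.mem_insert_iff]
  rw [hfil]
  have h0m : (0 : ZMod v) ∉ ({γ, -γ} : Finset (ZMod v)) := by
    simp only [Finset.mem_insert, Finset.mem_singleton]
    push_neg
    exact ⟨fun h' => hγ0 h'.symm, fun h' => hγ0 (neg_eq_zero.mp h'.symm)⟩
  have hγm : γ ∉ ({-γ} : Finset (ZMod v)) := by
    simpa using hγ
  rw [Finset.sum_insert h0m, Finset.sum_insert hγm, Finset.sum_singleton]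
  ring

theorem stmt3 (v : ℕ) (hv : v % 36 = 15) (P : Finset ℕ)
    (hP : ∀ p ∈ P, Nat.Prime p ∧ (p % 8 = 3 ∨ p % 8 = 5))
    (hfac : v = 3 * ∏ p ∈ P, p)
    (α β : ZMod v) (hα : α ≠ 0) (hβ : β ≠ 0) (S : Finset (ZMod v × ZMod v)) :
    ¬ IsAPS v α β S := by
  rintro ⟨h1, h2⟩
  haveI : NeZero v := ⟨by omega⟩
  have hinst : (fun (a b : ZMod v) => Classical.propDecidable (a = b))
      = (ZMod.decidableEq v : DecidableEq (ZMod v)) := Subsingleton.elim _ _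
  rw [hinst] at h1 h2
  set m : ℕ := ∏ p ∈ P, p with hm
  have hv3 : v = 3 * m := hfac
  obtain ⟨k, hk⟩ : ∃ k, v = 36 * k + 15 := ⟨v / 36, by omega⟩
  have hmk : m = 12 * k + 5 := by omega
  -- 2 is a unit mod v
  have hunit2 : IsUnit (2 : ZMod v) := by
    have h2 : IsUnit ((2 : ℕ) : ZMod v) := by
      rw [ZMod.isUnit_iff_coprime]
      have hodd : v % 2 = 1 := by omega
      show Nat.gcd 2 v = 1
      rw [Nat.gcd_rec, hodd]
      simp
    simpa using h2
  have hne : ∀ γ : ZMod v, γ ≠ 0 → γ ≠ -γ := by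
    intro γ h0 hEq
    apply h0
    have h2 : (2 : ZMod v) * γ = 0 := by linear_combination hEq
    exact (IsUnit.mul_right_eq_zero hunit2).mp h2
  -- the two sum-of-squares identities
  have e1 := aux_cover_sum _ α hα (hne α hα) h1
  have e2 := aux_cover_sum _ β hβ (hne β hβ) h2
  have l1 : ((S.val.bind fun p : ZMod v × ZMod v =>
        ({p.1, -p.1, p.2, -p.2} : Multiset (ZMod v))).map (· ^ 2)).sum
      = (S.val.map fun p : ZMod v × ZMod v => 2 * (p.1 ^ 2 + p.2 ^ 2)).sum := by
    rw [Multiset.map_bind, Multiset.sum_bind]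
    congr 1
    apply Multiset.map_congr rfl
    intro p _
    simp only [Multiset.insert_eq_cons, Multiset.map_cons, Multiset.map_singleton,
      Multiset.sum_cons, Multiset.sum_singleton]
    ring
  have l2 : ((S.val.bind fun p : ZMod v × ZMod v =>
        ({p.1 + p.2, -(p.1 + p.2), p.1 - p.2, -(p.1 - p.2)} : Multiset (ZMod v))).map
          (· ^ 2)).sum
      = (S.val.map fun p : ZMod v × ZMod v => 2 * (2 * (p.1 ^ 2 + p.2 ^ 2))).sum := by
    rw [Multiset.map_bind, Multiset.sum_bind]
    congr 1
    apply Multiset.map_congr rfl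
    intro p _
    simp only [Multiset.insert_eq_cons, Multiset.map_cons, Multiset.map_singleton,
      Multiset.sum_cons, Multiset.sum_singleton]
    ring
  rw [l1] at e1
  rw [l2, Multiset.sum_map_mul_left] at e2
  have key : (∑ z : ZMod v, z ^ 2) = 4 * α ^ 2 - 2 * β ^ 2 := by
    linear_combination e2 - 2 * e1
  -- compute the sum of squares over ZMod v
  have hSr : (∑ z : ZMod v, z ^ 2) = ((∑ j ∈ Finset.range v, j ^ 2 : ℕ) : ZMod v) := by
    push_cast
    refine Finset.sum_nbij' (fun z : ZMod v => z.val) (fun j => (j : ZMod v))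
      (fun a _ => Finset.mem_range.mpr a.val_lt) (fun a _ => Finset.mem_univ _)
      (fun a _ => by simp [ZMod.natCast_val, ZMod.cast_id]) (fun j hj => by
        simp [ZMod.val_cast_of_lt (Finset.mem_range.mp hj)]) (fun a _ => by
        simp [ZMod.natCast_val, ZMod.cast_id])
  have h6 := aux_sum_sq v
  have h6' : 6 * (2 * m + v * (432 * k ^ 2 + 342 * k + 67)) + 3 * v ^ 2
      = 2 * v ^ 3 + v := by
    rw [hmk, hk]; ring
  have hNval : (∑ j ∈ Finset.range v, j ^ 2)
      = 2 * m + v * (432 * k ^ 2 + 342 * k + 67) :=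
    Nat.eq_of_mul_eq_mul_left (by norm_num)
      (Nat.add_right_cancel (h6.trans h6'.symm))
  have hSig : (∑ z : ZMod v, z ^ 2) = ((2 * m : ℕ) : ZMod v) := by
    rw [hSr, hNval]
    push_cast
    simp [ZMod.natCast_self]
  have E : ((2 * m : ℕ) : ZMod v) = 4 * α ^ 2 - 2 * β ^ 2 := by
    rw [← hSig]; exact key
  -- reduce mod p for each p ∈ P
  have hdvdval : ∀ p ∈ P, p ∣ α.val ∧ p ∣ β.val := by
    intro p hp
    obtain ⟨hprime, h8⟩ := hP p hp
    haveI : Fact p.Prime := ⟨hprime⟩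
    have hpm : (p : ℕ) ∣ m := Finset.dvd_prod_of_mem _ hp
    have hpv : (p : ℕ) ∣ v := hv3 ▸ hpm.mul_left 3
    haveI : NeZero p := ⟨hprime.ne_zero⟩
    set f := ZMod.castHom hpv (ZMod p) with hf
    have hE := congrArg f E
    simp only [map_sub, map_mul, map_pow, map_natCast, map_ofNat] at hE
    have hL : ((2 * m : ℕ) : ZMod p) = 0 :=
      (ZMod.natCast_eq_zero_iff _ _).mpr (hpm.mul_left 2)
    rw [hL] at hE
    have hp2 : p ≠ 2 := by rcases h8 with h | h <;> omega
    have h2ne : (2 : ZMod p) ≠ 0 := by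
      intro hcon
      have hc2 : ((2 : ℕ) : ZMod p) = 0 := by push_cast; exact hcon
      rw [ZMod.natCast_eq_zero_iff] at hc2
      have := Nat.le_of_dvd (by norm_num) hc2
      rcases h8 with h | h <;> omega
    have h2a : 2 * f α ^ 2 = f β ^ 2 := by
      have hz : (2 : ZMod p) * (2 * f α ^ 2 - f β ^ 2) = 0 := by
        linear_combination -hE
      rcases mul_eq_zero.mp hz with h | h
      · exact absurd h h2ne
      · linear_combination h
    have ha0 : f α = 0 := by
      by_contra ha
      have hsq : IsSquare (2 : ZMod p) := by
        refine ⟨f β * (f α)⁻¹, ?_⟩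
        field_simp
        linear_combination h2a
      rw [ZMod.exists_sq_eq_two_iff hp2] at hsq
      rcases h8 with h | h <;> rcases hsq with h' | h' <;> omega
    have hb0 : f β = 0 := by
      have hsq0 : f β ^ 2 = 0 := by rw [← h2a, ha0]; ring
      exact pow_eq_zero_iff (by norm_num) |>.mp hsq0
    have hcast : ∀ γ : ZMod v, f γ = ((γ.val : ℕ) : ZMod p) := by
      intro γ
      conv_lhs => rw [← ZMod.natCast_rightInverse γ]
      rw [map_natCast]
    constructor
    · rw [hcast α] at ha0
      exact (ZMod.natCast_eq_zero_iff _ _).mp ha0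
    · rw [hcast β] at hb0
      exact (ZMod.natCast_eq_zero_iff _ _).mp hb0
  have hmdvd : ∀ γ : ZMod v, (∀ p ∈ P, p ∣ γ.val) → γ ≠ 0 → γ.val = m ∨ γ.val = 2 * m := by
    intro γ hdvd hγ0
    have hmd : m ∣ γ.val :=
      Finset.prod_primes_dvd _ (fun p hp => (hP p hp).1.prime) hdvd
    have hlt : γ.val < v := ZMod.val_lt γ
    have hne0 : γ.val ≠ 0 := fun h0 => hγ0 ((ZMod.val_eq_zero γ).mp h0)
    obtain ⟨c, hc⟩ := hmd
    have hm0 : 0 < m := by omega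
    have hclt : c < 3 := by
      by_contra hge
      push_neg at hge
      have : 3 * m ≤ m * c := by
        calc 3 * m = m * 3 := by ring
        _ ≤ m * c := Nat.mul_le_mul_left m hge
      omega
    have hc0 : c ≠ 0 := by
      intro h0; rw [h0, Nat.mul_zero] at hc; exact hne0 hc
    interval_cases c <;> omega
  have hαv : α.val = m ∨ α.val = 2 * m :=
    hmdvd α (fun p hp => (hdvdval p hp).1) hα
  have hβv : β.val = m ∨ β.val = 2 * m :=
    hmdvd β (fun p hp => (hdvdval p hp).2) hβ
  -- final contradiction mod 3
  have h3v : (3 : ℕ) ∣ v := ⟨m, hv3⟩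
  set g := ZMod.castHom h3v (ZMod 3) with hg
  have hE3 := congrArg g E
  simp only [map_sub, map_mul, map_pow, map_natCast, map_ofNat] at hE3
  have hcast3 : ∀ γ : ZMod v, g γ = ((γ.val : ℕ) : ZMod 3) := by
    intro γ
    conv_lhs => rw [← ZMod.natCast_rightInverse γ]
    rw [map_natCast]
  have hsq3 : ∀ γ : ZMod v, γ.val = m ∨ γ.val = 2 * m → (g γ) ^ 2 = 1 := by
    intro γ hval
    rw [hcast3 γ]
    rcases hval with h | h <;> rw [h]
    · rw [← ZMod.natCast_mod m 3, show m % 3 = 2 by omega]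
      decide
    · rw [← ZMod.natCast_mod (2 * m) 3, show (2 * m) % 3 = 1 by omega]
      decide
  have hL3 : ((2 * m : ℕ) : ZMod 3) = 1 := by
    rw [← ZMod.natCast_mod (2 * m) 3, show (2 * m) % 3 = 1 by omega]
    norm_num
  rw [hL3, hsq3 α hαv, hsq3 β hβv] at hE3
  revert hE3
  decide
end

section
/- Let v ≡ 7 or 11 (mod 12) with v = p₁·p₂·…·p_t, where p₁,…,p_t are pairwise distinct primes each congruent to 3 or −3 modulo 8. Then there is no APS(v,α,β) for any nonzero α, β ∈ Z_v. -/
open scoped Classical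

private lemma sum_univ_sq_zero (v : ℕ) [NeZero v] (h2 : IsUnit (2 : ZMod v))
    (h3 : IsUnit (3 : ZMod v)) : ∑ z : ZMod v, z ^ 2 = 0 := by
  set T := ∑ z : ZMod v, z ^ 2 with hT
  have key : ∀ c : ZMod v, IsUnit c → c ^ 2 * T = T := by
    intro c hc
    obtain ⟨u, rfl⟩ := hc
    calc (u : ZMod v) ^ 2 * T = ∑ z : ZMod v, ((u : ZMod v) * z) ^ 2 := by
          rw [hT, Finset.mul_sum]; exact Finset.sum_congr rfl (fun z _ => by ring)
      _ = ∑ z : ZMod v, z ^ 2 :=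
          Fintype.sum_bijective (fun z => (u : ZMod v) * z) (Units.mulLeft u).bijective _ _
            (fun z => rfl)
  have k2 := key 2 h2
  have k3 := key 3 h3
  linear_combination 3 * k2 - k3

private lemma multiset_map_sum_eq {v : ℕ} [NeZero v] (M : Multiset (ZMod v))
    (A : Finset (ZMod v)) (h : ∀ z, M.count z = if z ∈ A then 0 else 1)
    (f : ZMod v → ZMod v) :
    (M.map f).sum = (∑ z : ZMod v, f z) - ∑ z ∈ A, f z := by
  have hM : M = (Finset.univ \ A).val := by
    ext z
    rw [h z]
    show _ = Multiset.count z (Finset.univ.val - A.val)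
    rw [Multiset.count_sub,
      Multiset.count_eq_one_of_mem Finset.univ.nodup (Finset.mem_val.mpr (Finset.mem_univ z)),
      Multiset.count_eq_of_nodup A.nodup]
    by_cases hz : z ∈ A <;> simp [Finset.mem_val, hz]
  rw [hM]
  show ∑ z ∈ Finset.univ \ A, f z = _
  rw [Finset.sum_sdiff_eq_sub (Finset.subset_univ A)]

theorem stmt4 (v : ℕ) (hv : v % 12 = 7 ∨ v % 12 = 11) (P : Finset ℕ)
    (hP : ∀ p ∈ P, Nat.Prime p ∧ (p % 8 = 3 ∨ p % 8 = 5))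
    (hfac : v = ∏ p ∈ P, p)
    (α β : ZMod v) (hα : α ≠ 0) (hβ : β ≠ 0) (S : Finset (ZMod v × ZMod v)) :
    ¬ IsAPS v α β S := by
  rintro ⟨h1, h2⟩
  haveI : NeZero v := ⟨by omega⟩
  -- 2 and 3 are units
  have h2u : IsUnit (2 : ZMod v) := by
    rw [show (2 : ZMod v) = ((2 : ℕ) : ZMod v) by norm_cast, ZMod.isUnit_iff_coprime]
    exact Nat.prime_two.coprime_iff_not_dvd.mpr (by omega)
  have h3u : IsUnit (3 : ZMod v) := by
    rw [show (3 : ZMod v) = ((3 : ℕ) : ZMod v) by norm_cast, ZMod.isUnit_iff_coprime]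
    exact Nat.prime_three.coprime_iff_not_dvd.mpr (by omega)
  have hT : ∑ z : ZMod v, z ^ 2 = 0 := sum_univ_sq_zero v h2u h3u
  -- no 2-torsion
  have htors : ∀ x : ZMod v, x ≠ 0 → x ≠ -x := by
    intro x hx hxx
    apply hx
    have h2x : (2 : ZMod v) * x = 0 := by linear_combination hxx
    obtain ⟨u, hu⟩ := h2u
    calc x = ↑u⁻¹ * (↑u * x) := by rw [← mul_assoc]; simp
    _ = ↑u⁻¹ * ((2 : ZMod v) * x) := by rw [hu]
    _ = 0 := by rw [h2x, mul_zero]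
  -- sums over the small finsets
  have hsum3 : ∀ x : ZMod v, x ≠ 0 → ∑ z ∈ ({0, x, -x} : Finset (ZMod v)), z ^ 2 = 2 * x ^ 2 := by
    intro x hx
    have hz1 : (0 : ZMod v) ∉ ({x, -x} : Finset (ZMod v)) := by
      simp only [Finset.mem_insert, Finset.mem_singleton]
      push_neg
      exact ⟨Ne.symm hx, fun h => hx (neg_eq_zero.mp h.symm)⟩
    have hz2 : x ∉ ({-x} : Finset (ZMod v)) := by simpa using htors x hx
    rw [Finset.sum_insert hz1, Finset.sum_insert hz2, Finset.sum_singleton]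
    ring
  -- translate the two conditions
  have E1 := multiset_map_sum_eq
    (S.val.bind fun p => ({p.1, -p.1, p.2, -p.2} : Multiset (ZMod v)))
    ({0, α, -α} : Finset (ZMod v))
    (fun z => by
      have h := h1 z
      convert h using 2;
        simp [Set.mem_insert_iff, Set.mem_singleton_iff, Finset.mem_insert,
          Finset.mem_singleton]) (fun z => z ^ 2)
  have E2 := multiset_map_sum_eq
    (S.val.bind fun p =>
      ({p.1 + p.2, -(p.1 + p.2), p.1 - p.2, -(p.1 - p.2)} : Multiset (ZMod v)))
    ({0, β, -β} : Finset (ZMod v))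
    (fun z => by
      have h := h2 z
      convert h using 2;
        simp [Set.mem_insert_iff, Set.mem_singleton_iff, Finset.mem_insert,
          Finset.mem_singleton]) (fun z => z ^ 2)
  rw [hT, hsum3 α hα, zero_sub] at E1
  rw [hT, hsum3 β hβ, zero_sub] at E2
  -- compute the two multiset sums
  have L1 : ((S.val.bind fun p => ({p.1, -p.1, p.2, -p.2} : Multiset (ZMod v))).map
      (fun z => z ^ 2)).sum
      = (S.val.map fun p => 2 * (p.1 ^ 2 + p.2 ^ 2)).sum := by
    rw [Multiset.map_bind, Multiset.sum_bind]
    congr 1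
    apply Multiset.map_congr rfl
    intro p _
    simp only [Multiset.insert_eq_cons, Multiset.map_cons, Multiset.map_singleton,
      Multiset.sum_cons, Multiset.sum_singleton]
    ring
  have L2 : ((S.val.bind fun p =>
      ({p.1 + p.2, -(p.1 + p.2), p.1 - p.2, -(p.1 - p.2)} : Multiset (ZMod v))).map
      (fun z => z ^ 2)).sum
      = (S.val.map fun p => 2 * (2 * (p.1 ^ 2 + p.2 ^ 2))).sum := by
    rw [Multiset.map_bind, Multiset.sum_bind]
    congr 1
    apply Multiset.map_congr rfl
    intro p _
    simp only [Multiset.insert_eq_cons, Multiset.map_cons, Multiset.map_singleton,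
      Multiset.sum_cons, Multiset.sum_singleton]
    ring
  rw [L1] at E1
  rw [L2, Multiset.sum_map_mul_left, E1] at E2
  -- E2 : 2 * -(2 * α^2) = -(2 * β^2)
  have hrel : (2 : ZMod v) * β ^ 2 = 4 * α ^ 2 := by linear_combination E2
  -- now go modulo each prime
  have hdvd : ∀ p ∈ P, p ∣ α.val := by
    intro p hp
    obtain ⟨pp, hp8⟩ := hP p hp
    haveI : Fact p.Prime := ⟨pp⟩
    have hpv : p ∣ v := hfac ▸ Finset.dvd_prod_of_mem _ hp
    set φ := ZMod.castHom hpv (ZMod p) with hφ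
    have hmap : (2 : ZMod p) * (φ β) ^ 2 = 4 * (φ α) ^ 2 := by
      have := congrArg φ hrel
      simpa only [map_mul, map_pow, map_ofNat] using this
    have h2ne : (2 : ZMod p) ≠ 0 := by
      intro h
      have h2 := (ZMod.natCast_eq_zero_iff 2 p).mp (by exact_mod_cast h)
      have := Nat.le_of_dvd (by norm_num) h2
      omega
    have hb2 : (φ β) ^ 2 = 2 * (φ α) ^ 2 := by
      apply mul_left_cancel₀ h2ne
      linear_combination hmap
    have ha0 : φ α = 0 := by
      by_contra hane
      have hsq : IsSquare (2 : ZMod p) := by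
        refine ⟨φ β * (φ α)⁻¹, ?_⟩
        field_simp
        linear_combination -hb2
      have hp2 : p ≠ 2 := by omega
      rw [ZMod.exists_sq_eq_two_iff hp2] at hsq
      omega
    have hcast : ((α.val : ℕ) : ZMod p) = φ α :=
      (ZMod.natCast_val α).trans (ZMod.castHom_apply α).symm
    exact (ZMod.natCast_eq_zero_iff _ _).mp (hcast.trans ha0)
  have hprod : (∏ p ∈ P, p) ∣ α.val :=
    Finset.prod_primes_dvd _ (fun p hp => (hP p hp).1.prime) hdvd
  have hvdvd : v ∣ α.val := (dvd_of_eq hfac).trans hprod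
  have hval : α.val = 0 := Nat.eq_zero_of_dvd_of_lt hvdvd (ZMod.val_lt α)
  exact hα ((ZMod.val_eq_zero α).mp hval)
end

section
/- Let v ≡ 3 (mod 4) be a positive integer such that none of the following three conditions holds: (i) v ≡ 3 (mod 12) and v = 3^{2a}·v₁ for some integer a ≥ 1 and some positive integer v₁ not divisible by 3; (ii) v ≡ 15 (mod 36) and v is 3 times a product of pairwise distinct primes each congruent to ±3 modulo 8; (iii) v ≡ 7 or 11 (mod 12) and v is a product of pairwise distinct primes each congruent to ±3 modulo 8. Then: if v ≡ 3 (mod 12), there exist integers α, β, both not divisible by v, such that 2α² − β² ≡ v/3 (mod v); and if v ≡ 7 or 11 (mod 12), there exist integers α, β, both not divisible by v, such that 2α² − β² ≡ 0 (mod v). -/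
/-!
Modulo an odd prime `p`, `2` is a square exactly when `p ≡ ±1 (mod 8)`. Hence if an odd `n` is
not a product of distinct primes `≡ ±3 (mod 8)`, either `p² ∣ n` for a prime `p` and
`α = β = n / p` works, or `n = p * w` with `p ≡ ±1 (mod 8)`, `p ∤ w`, `s² ≡ 2 (mod p)`, and
`α = w`, `β = s * w` works.

For `v ≡ 3 (mod 12)` write `v = 3 ^ e * m` with `3 ∤ m`; excluding (i) forces `e` odd, and
explicit multiples of `3 ^ ((e - 1) / 2) * m` work unless `e = 1` and `m ≡ 2 (mod 3)`. In that case
excluding (ii) gives a solution of `2 α² - β² ≡ 0 (mod m)`, which the Chinese remainder theorem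
glues to `α ≡ 1`, `β ≡ 0 (mod 3)`.
-/

def TwoSqSubSqRep (n : ℕ) (c : ℤ) : Prop :=
  ∃ α β : ℤ, ¬ (n : ℤ) ∣ α ∧ ¬ (n : ℤ) ∣ β ∧ 2 * α ^ 2 - β ^ 2 ≡ c [ZMOD n]

theorem Int.exists_modEq_and_modEq {a b : ℤ} (h : IsCoprime a b) (x y : ℤ) :
    ∃ z, z ≡ x [ZMOD a] ∧ z ≡ y [ZMOD b] := by
  obtain ⟨u, w, huw⟩ := h
  refine ⟨x * (w * b) + y * (u * a), ?_, ?_⟩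
  · exact Int.modEq_iff_dvd.2 ⟨u * (x - y), by linear_combination -x * huw⟩
  · exact Int.modEq_iff_dvd.2 ⟨w * (y - x), by linear_combination -y * huw⟩

namespace TwoSqSubSqRep

theorem congr {n : ℕ} {c c' : ℤ} (h : TwoSqSubSqRep n c) (hc : c ≡ c' [ZMOD n]) :
    TwoSqSubSqRep n c' :=
  let ⟨α, β, hα, hβ, hαβ⟩ := h
  ⟨α, β, hα, hβ, hαβ.trans hc⟩

theorem of_pos_of_lt {n a b : ℕ} {c : ℤ} (ha : 0 < a) (han : a < n) (hb : 0 < b) (hbn : b < n)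
    (h : (n : ℤ) ∣ c - (2 * a ^ 2 - b ^ 2)) : TwoSqSubSqRep n c :=
  ⟨a, b, by exact_mod_cast Nat.not_dvd_of_pos_of_lt ha han,
    by exact_mod_cast Nat.not_dvd_of_pos_of_lt hb hbn, Int.modEq_iff_dvd.2 h⟩

theorem mul_of_coprime {a b : ℕ} {c : ℤ} (hab : a.Coprime b) (ha : TwoSqSubSqRep a c)
    (hb : ∃ x y : ℤ, 2 * x ^ 2 - y ^ 2 ≡ c [ZMOD b]) : TwoSqSubSqRep (a * b) c := by
  obtain ⟨α, β, hα, hβ, hαβ⟩ := ha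
  obtain ⟨x, y, hxy⟩ := hb
  have hco : IsCoprime (a : ℤ) b := Nat.isCoprime_iff_coprime.2 hab
  obtain ⟨z, hzα, hzx⟩ := Int.exists_modEq_and_modEq hco α x
  obtain ⟨t, htβ, hty⟩ := Int.exists_modEq_and_modEq hco β y
  have not_dvd {u u' : ℤ} (hu : u ≡ u' [ZMOD a]) (hu' : ¬ (a : ℤ) ∣ u') :
      ¬ ((a * b : ℕ) : ℤ) ∣ u := fun h => hu' <| (Int.ModEq.dvd_iff hu).1 <|
    (Int.natCast_dvd_natCast.2 (Nat.dvd_mul_right a b)).trans h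
  refine ⟨z, t, not_dvd hzα hα, not_dvd htβ hβ, ?_⟩
  rw [Nat.cast_mul, ← Int.modEq_and_modEq_iff_modEq_mul (by simpa using hab)]
  exact ⟨((hzα.pow 2).mul_left 2 |>.sub (htβ.pow 2)).trans hαβ,
    ((hzx.pow 2).mul_left 2 |>.sub (hty.pow 2)).trans hxy⟩

end TwoSqSubSqRep

theorem twoSqSubSqRep_zero_of_mul_self_dvd {n p : ℕ} (hn : n ≠ 0) (hp : 1 < p) (h : p * p ∣ n) :
    TwoSqSubSqRep n 0 := by
  obtain ⟨t, rfl⟩ := h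
  have ht : 0 < t := Nat.pos_of_ne_zero (right_ne_zero_of_mul hn)
  have hlt : p * t < p * p * t := by
    have : 0 < p * t := by positivity
    nlinarith
  exact .of_pos_of_lt (by positivity) hlt (by positivity) hlt
    ⟨-t, by push_cast; ring⟩

theorem twoSqSubSqRep_zero_mul {p w : ℕ} {s : ℤ} (hs2 : (p : ℤ) ∣ s ^ 2 - 2)
    (hs : ¬ (p : ℤ) ∣ s) (hw : ¬ p ∣ w) : TwoSqSubSqRep (p * w) 0 := by
  have hw0 : (w : ℤ) ≠ 0 := Int.natCast_ne_zero.2 <| by rintro rfl; exact hw (dvd_zero p)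
  obtain ⟨k, hk⟩ := hs2
  refine ⟨w, s * w, fun h => hw ?_, fun h => hs ?_, ?_⟩
  · exact Int.natCast_dvd_natCast.1 ((Int.natCast_dvd_natCast.2 (Nat.dvd_mul_right p w)).trans h)
  · push_cast at h
    exact (mul_dvd_mul_iff_right hw0).1 h
  · exact Int.modEq_iff_dvd.2 ⟨w * k, by push_cast; linear_combination (w : ℤ) ^ 2 * hk⟩

theorem exists_sq_sub_two_dvd {p : ℕ} (hp : p.Prime) (hp8 : p % 8 = 1 ∨ p % 8 = 7) :
    ∃ s : ℤ, (p : ℤ) ∣ s ^ 2 - 2 ∧ ¬ (p : ℤ) ∣ s := by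
  have := Fact.mk hp
  have hp2 : p ≠ 2 := by rintro rfl; omega
  obtain ⟨y, hy⟩ := (ZMod.exists_sq_eq_two_iff hp2).2 hp8
  refine ⟨(y.cast : ℤ), ?_, ?_⟩
  · rw [← ZMod.intCast_zmod_eq_zero_iff_dvd]
    push_cast
    rw [hy]; ring
  · rw [← ZMod.intCast_zmod_eq_zero_iff_dvd, ZMod.intCast_zmod_cast]
    rintro rfl
    have : ((2 : ℕ) : ZMod p) = 0 := by simpa using hy
    rw [ZMod.natCast_eq_zero_iff] at this
    exact hp2 ((Nat.prime_dvd_prime_iff_eq hp Nat.prime_two).1 this)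

theorem twoSqSubSqRep_zero_of_odd {n : ℕ} (hn : Odd n)
    (h : ¬ ∃ P : Finset ℕ, (∀ p ∈ P, p.Prime ∧ (p % 8 = 3 ∨ p % 8 = 5)) ∧ n = ∏ p ∈ P, p) :
    TwoSqSubSqRep n 0 := by
  by_cases hsf : Squarefree n
  · obtain ⟨p, hp, hp8⟩ : ∃ p ∈ n.primeFactors, p % 8 = 1 ∨ p % 8 = 7 := by
      by_contra! hc
      refine h ⟨n.primeFactors, fun p hp => ⟨Nat.prime_of_mem_primeFactors hp, ?_⟩,
        (Nat.prod_primeFactors_of_squarefree hsf).symm⟩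
      have hp2 : p % 2 = 1 := Nat.odd_iff.1 (hn.of_dvd_nat (Nat.dvd_of_mem_primeFactors hp))
      have := hc p hp
      omega
    have hpp := Nat.prime_of_mem_primeFactors hp
    obtain ⟨w, rfl⟩ := Nat.dvd_of_mem_primeFactors hp
    obtain ⟨s, hs2, hs⟩ := exists_sq_sub_two_dvd hpp hp8
    exact twoSqSubSqRep_zero_mul hs2 hs <|
      (Nat.Prime.coprime_iff_not_dvd hpp).1 (Nat.squarefree_mul_iff.1 hsf).1
  · rw [Nat.squarefree_iff_prime_squarefree] at hsf
    push Not at hsf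
    obtain ⟨p, hp, hpp⟩ := hsf
    exact twoSqSubSqRep_zero_of_mul_self_dvd hn.pos.ne' hp.one_lt hpp

theorem twoSqSubSqRep_three_pow_mul_of_mod_three_eq_one {m : ℕ} (r : ℕ) (hm : 0 < m)
    (hm3 : m % 3 = 1) : TwoSqSubSqRep (3 ^ (2 * r + 1) * m) (3 ^ (2 * r) * m) := by
  obtain ⟨k, rfl⟩ : ∃ k, m = 3 * k + 1 := ⟨m / 3, by omega⟩
  have hlt : 3 ^ r * (3 * k + 1) < 3 ^ (2 * r + 1) * (3 * k + 1) :=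
    Nat.mul_lt_mul_of_pos_right (Nat.pow_lt_pow_right (by norm_num) (by omega)) hm
  exact .of_pos_of_lt (by positivity) hlt (by positivity) hlt ⟨-k, by push_cast; ring⟩

theorem twoSqSubSqRep_three_pow_mul_of_mod_three_eq_two {m : ℕ} (r : ℕ) (hm : 0 < m)
    (hm3 : m % 3 = 2) : TwoSqSubSqRep (3 ^ (2 * r + 3) * m) (3 ^ (2 * r + 2) * m) := by
  obtain ⟨k, rfl⟩ : ∃ k, m = 3 * k + 2 := ⟨m / 3, by omega⟩
  have hlt (i : ℕ) (hi : i < 2 * r + 3) : 3 ^ i * (3 * k + 2) < 3 ^ (2 * r + 3) * (3 * k + 2) :=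
    Nat.mul_lt_mul_of_pos_right (Nat.pow_lt_pow_right (by norm_num) hi) hm
  exact .of_pos_of_lt (by positivity) (hlt (r + 1) (by omega)) (by positivity)
    (hlt (r + 2) (by omega)) ⟨7 * k + 5, by push_cast; ring⟩

theorem twoSqSubSqRep_three_mul {m : ℕ} (hm : Odd m) (hm3 : m % 3 = 2)
    (h : ¬ ∃ P : Finset ℕ, (∀ p ∈ P, p.Prime ∧ (p % 8 = 3 ∨ p % 8 = 5)) ∧ m = ∏ p ∈ P, p) :
    TwoSqSubSqRep (3 * m) m := by
  have hmm : TwoSqSubSqRep m m :=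
    (twoSqSubSqRep_zero_of_odd hm h).congr (Int.modEq_zero_iff_dvd.2 dvd_rfl).symm
  rw [mul_comm]
  refine hmm.mul_of_coprime ?_ ⟨1, 0, ?_⟩
  · exact ((Nat.Prime.coprime_iff_not_dvd Nat.prime_three).2 (by omega)).symm
  · rw [Int.ModEq]; omega

theorem twoSqSubSqRep_div_three {v : ℕ} (hv : v % 12 = 3)
    (h1 : ¬ ∃ a v₁ : ℕ, 1 ≤ a ∧ 0 < v₁ ∧ ¬ 3 ∣ v₁ ∧ v = 3 ^ (2 * a) * v₁)
    (h2 : ¬ (v % 36 = 15 ∧ ∃ P : Finset ℕ,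
      (∀ p ∈ P, Nat.Prime p ∧ (p % 8 = 3 ∨ p % 8 = 5)) ∧ v = 3 * ∏ p ∈ P, p)) :
    TwoSqSubSqRep v (v / 3 : ℕ) := by
  obtain ⟨e, m, hm3, hvm⟩ := Nat.exists_eq_pow_mul_and_not_dvd (by omega : v ≠ 0) 3 (by norm_num)
  have hm0 : 0 < m := Nat.pos_of_ne_zero <| by rintro rfl; exact hm3 (dvd_zero 3)
  obtain ⟨r, rfl⟩ : Odd e := by
    rcases Nat.even_or_odd' e with ⟨a, rfl | rfl⟩
    · rcases Nat.eq_zero_or_pos a with rfl | ha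
      · simp only [mul_zero, pow_zero, one_mul] at hvm
        omega
      · exact absurd ⟨a, m, ha, hm0, hm3, hvm⟩ h1
    · exact odd_two_mul_add_one a
  have hdiv : v / 3 = 3 ^ (2 * r) * m := by
    rw [hvm, pow_succ, mul_right_comm, Nat.mul_div_cancel _ (by norm_num)]
  rw [hdiv, hvm]
  push_cast
  rcases (by omega : m % 3 = 1 ∨ m % 3 = 2) with hm1 | hm2
  · exact twoSqSubSqRep_three_pow_mul_of_mod_three_eq_one r hm0 hm1
  rcases r with _ | r
  · simp only [mul_zero, zero_add, pow_one, pow_zero, one_mul] at hvm ⊢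
    refine twoSqSubSqRep_three_mul (Nat.odd_iff.2 (by omega)) hm2 ?_
    rintro ⟨P, hP, rfl⟩
    exact h2 ⟨by omega, P, hP, hvm⟩
  · convert twoSqSubSqRep_three_pow_mul_of_mod_three_eq_two r hm0 hm2 using 3 <;> ring

theorem stmt5_general (v : ℕ)
    (h1 : ¬ (v % 12 = 3 ∧ ∃ a v₁ : ℕ, 1 ≤ a ∧ 0 < v₁ ∧ ¬ (3 ∣ v₁) ∧ v = 3 ^ (2 * a) * v₁))
    (h2 : ¬ (v % 36 = 15 ∧ ∃ P : Finset ℕ,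
      (∀ p ∈ P, Nat.Prime p ∧ (p % 8 = 3 ∨ p % 8 = 5)) ∧ v = 3 * ∏ p ∈ P, p))
    (h3 : ¬ ((v % 12 = 7 ∨ v % 12 = 11) ∧ ∃ P : Finset ℕ,
      (∀ p ∈ P, Nat.Prime p ∧ (p % 8 = 3 ∨ p % 8 = 5)) ∧ v = ∏ p ∈ P, p)) :
    (v % 12 = 3 → ∃ α β : ℤ, ¬ ((v : ℤ) ∣ α) ∧ ¬ ((v : ℤ) ∣ β) ∧
      2 * α ^ 2 - β ^ 2 ≡ ((v / 3 : ℕ) : ℤ) [ZMOD (v : ℤ)]) ∧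
    ((v % 12 = 7 ∨ v % 12 = 11) → ∃ α β : ℤ, ¬ ((v : ℤ) ∣ α) ∧ ¬ ((v : ℤ) ∣ β) ∧
      2 * α ^ 2 - β ^ 2 ≡ 0 [ZMOD (v : ℤ)]) :=
  ⟨fun hv => twoSqSubSqRep_div_three hv (fun h => h1 ⟨hv, h⟩) h2,
    fun hv => twoSqSubSqRep_zero_of_odd (Nat.odd_iff.2 (by omega)) fun hP => h3 ⟨hv, hP⟩⟩

theorem stmt5 (v : ℕ) (hv : v % 4 = 3)
    (h1 : ¬ (v % 12 = 3 ∧ ∃ a v₁ : ℕ, 1 ≤ a ∧ 0 < v₁ ∧ ¬ (3 ∣ v₁) ∧ v = 3 ^ (2 * a) * v₁))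
    (h2 : ¬ (v % 36 = 15 ∧ ∃ P : Finset ℕ,
      (∀ p ∈ P, Nat.Prime p ∧ (p % 8 = 3 ∨ p % 8 = 5)) ∧ v = 3 * ∏ p ∈ P, p))
    (h3 : ¬ ((v % 12 = 7 ∨ v % 12 = 11) ∧ ∃ P : Finset ℕ,
      (∀ p ∈ P, Nat.Prime p ∧ (p % 8 = 3 ∨ p % 8 = 5)) ∧ v = ∏ p ∈ P, p)) :
    (v % 12 = 3 → ∃ α β : ℤ, ¬ ((v : ℤ) ∣ α) ∧ ¬ ((v : ℤ) ∣ β) ∧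
      2 * α ^ 2 - β ^ 2 ≡ ((v / 3 : ℕ) : ℤ) [ZMOD (v : ℤ)]) ∧
    ((v % 12 = 7 ∨ v % 12 = 11) → ∃ α β : ℤ, ¬ ((v : ℤ) ∣ α) ∧ ¬ ((v : ℤ) ∣ β) ∧
      2 * α ^ 2 - β ^ 2 ≡ 0 [ZMOD (v : ℤ)]) :=
  stmt5_general v h1 h2 h3
end

section
/- Let G be a finite abelian group, let H be a subgroup of G, and let A₁, A₂ ⊆ H with |A₁| = |A₂|. If there exist a PPS(G,H,H) and a PPS(H,A₁,A₂), then there exists a PPS(G,A₁,A₂). -/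
open scoped Classical

/-!
Since `A₁, A₂ ⊆ H`, the PPS of `H` lives inside the set of elements that the PPS(G,H,H)
leaves uncovered, so the two pair sets are disjoint and their union covers `G \ H` from the
first part and `H \ Aᵢ` from the second, each exactly once.
-/

def CoversComplExactly {α : Type*} (M : Multiset α) (A : Set α) : Prop :=
  ∀ z : α, M.count z = if z ∈ A then 0 else 1

theorem CoversComplExactly.notMem {α : Type*} {M : Multiset α} {A : Set α}
    (h : CoversComplExactly M A) {z : α} (hz : z ∈ A) : z ∉ M := by
  rw [← Multiset.count_eq_zero, h z, if_pos hz]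

theorem CoversComplExactly.add_map {α β : Type*} {f : β → α} (hf : Function.Injective f)
    {M : Multiset α} {N : Multiset β} {A : Set α} (hM : CoversComplExactly M (Set.range f))
    (hN : CoversComplExactly N (f ⁻¹' A)) (hA : A ⊆ Set.range f) :
    CoversComplExactly (M + N.map f) A := by
  intro z
  rw [Multiset.count_add, hM z]
  by_cases hz : z ∈ Set.range f
  · obtain ⟨a, rfl⟩ := hz
    rw [if_pos (Set.mem_range_self a), Multiset.count_map_eq_count' f N hf, hN a, zero_add]
    rfl
  · have hzN : z ∉ N.map f := fun hmem ↦ by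
      obtain ⟨a, -, rfl⟩ := Multiset.mem_map.mp hmem
      exact hz (Set.mem_range_self a)
    rw [if_neg hz, Multiset.count_eq_zero.mpr hzN, if_neg (fun h ↦ hz (hA h))]

theorem Multiset.bind_map_prodMap {α β : Type*} {q : α × α → Multiset α}
    {r : β × β → Multiset β} {f : β → α} (hqr : ∀ p, q (Prod.map f f p) = (r p).map f)
    (N : Multiset (β × β)) :
    (N.map (Prod.map f f)).bind q = (N.bind r).map f := by
  rw [Multiset.bind_map, Multiset.map_bind]
  exact Multiset.bind_congr fun p _ ↦ hqr p

section

variable {G K : Type*} [AddCommGroup G] [AddCommGroup K]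

def signedEntries (p : G × G) : Multiset G := {p.1, -p.1, p.2, -p.2}

def signedSumDiffs (p : G × G) : Multiset G := {p.1 + p.2, -(p.1 + p.2), p.1 - p.2, -(p.1 - p.2)}

theorem isPPS_iff (A₁ A₂ : Set G) (S : Finset (G × G)) :
    IsPPS A₁ A₂ S ↔ CoversComplExactly (S.val.bind signedEntries) A₁ ∧
      CoversComplExactly (S.val.bind signedSumDiffs) A₂ :=
  Iff.rfl

theorem signedEntries_prodMap (f : K →+ G) (p : K × K) :
    signedEntries (Prod.map f f p) = (signedEntries p).map f := by
  simp [signedEntries]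

theorem signedSumDiffs_prodMap (f : K →+ G) (p : K × K) :
    signedSumDiffs (Prod.map f f p) = (signedSumDiffs p).map f := by
  simp [signedSumDiffs]

variable (f : K →+ G) (hf : Function.Injective f)

def prodMapEmbedding : K × K ↪ G × G :=
  (⟨f, hf⟩ : K ↪ G).prodMap ⟨f, hf⟩

theorem disjoint_map_prodMapEmbedding {S₁ : Finset (G × G)}
    (h₁ : IsPPS (Set.range f) (Set.range f) S₁) (S₂ : Finset (K × K)) :
    Disjoint S₁ (S₂.map (prodMapEmbedding f hf)) := by
  refine Finset.disjoint_left.mpr fun p hp₁ hp₂ ↦ ?_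
  obtain ⟨q, -, rfl⟩ := Finset.mem_map.mp hp₂
  rw [isPPS_iff] at h₁
  refine h₁.1.notMem (Set.mem_range_self q.1) (Multiset.mem_bind.mpr ⟨_, hp₁, ?_⟩)
  simp [prodMapEmbedding, signedEntries]

theorem IsPPS.disjUnion_map {S₁ : Finset (G × G)} {S₂ : Finset (K × K)} {A₁ A₂ : Set G}
    (h₁ : IsPPS (Set.range f) (Set.range f) S₁) (h₂ : IsPPS (f ⁻¹' A₁) (f ⁻¹' A₂) S₂)
    (hA₁ : A₁ ⊆ Set.range f) (hA₂ : A₂ ⊆ Set.range f) :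
    IsPPS A₁ A₂ (S₁.disjUnion (S₂.map (prodMapEmbedding f hf))
      (disjoint_map_prodMapEmbedding f hf h₁ S₂)) := by
  rw [isPPS_iff] at h₁ h₂ ⊢
  have hval : (S₂.map (prodMapEmbedding f hf)).val = S₂.val.map (Prod.map f f) := rfl
  simp only [Finset.disjUnion_val, Multiset.add_bind, hval,
    Multiset.bind_map_prodMap (signedEntries_prodMap f),
    Multiset.bind_map_prodMap (signedSumDiffs_prodMap f)]
  exact ⟨h₁.1.add_map hf h₂.1 hA₁, h₁.2.add_map hf h₂.2 hA₂⟩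

end

theorem stmt6_general {G : Type*} [AddCommGroup G]
    (H : AddSubgroup G) (A₁ A₂ : Set G)
    (hA₁ : A₁ ⊆ (H : Set G)) (hA₂ : A₂ ⊆ (H : Set G))
    (hGH : ∃ S : Finset (G × G), IsPPS (H : Set G) (H : Set G) S)
    (hH : ∃ S : Finset (H × H),
      IsPPS ((Subtype.val ⁻¹' A₁ : Set H)) ((Subtype.val ⁻¹' A₂ : Set H)) S) :
    ∃ S : Finset (G × G), IsPPS A₁ A₂ S := by
  obtain ⟨S₁, h₁⟩ := hGH
  obtain ⟨S₂, h₂⟩ := hH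
  have hrange : Set.range H.subtype = H := Subtype.range_coe
  rw [← hrange] at h₁ hA₁ hA₂
  exact ⟨_, h₁.disjUnion_map H.subtype H.subtype_injective h₂ hA₁ hA₂⟩

theorem stmt6 {G : Type*} [AddCommGroup G] [Fintype G]
    (H : AddSubgroup G) (A₁ A₂ : Set G)
    (hA₁ : A₁ ⊆ (H : Set G)) (hA₂ : A₂ ⊆ (H : Set G)) (hcard : A₁.ncard = A₂.ncard)
    (hGH : ∃ S : Finset (G × G), IsPPS (H : Set G) (H : Set G) S)
    (hH : ∃ S : Finset (H × H),
      IsPPS ((Subtype.val ⁻¹' A₁ : Set H)) ((Subtype.val ⁻¹' A₂ : Set H)) S) :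
    ∃ S : Finset (G × G), IsPPS A₁ A₂ S :=
  stmt6_general H A₁ A₂ hA₁ hA₂ hGH hH
end

section
/- Let u, v be positive integers with gcd(u,6) = 1, and let A₁, A₂ ⊆ Z_v with |A₁| = |A₂|. If there exists a PPS(Z_v, A₁, A₂), then there exists a PPS(Z_{vu}, B₁, B₂), where for i ∈ {1,2}, B_i is the preimage of A_i under the canonical projection Z_{vu} → Z_v (equivalently, B_i = {a + v·s : a a lift of an element of A_i, s ∈ Z_u}, reduced modulo vu). -/
open scoped Classical

set_option linter.unusedSectionVars false

namespace PPSaux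

variable (v u : ℕ)

def fv (a : ZMod v) : ZMod (v * u) := (a.val : ZMod (v * u))

def gv (i : ZMod u) : ZMod (v * u) := ((v * i.val : ℕ) : ZMod (v * u))

variable [NeZero v] [NeZero u]

instance : NeZero (v * u) := ⟨Nat.mul_ne_zero (NeZero.ne v) (NeZero.ne u)⟩

lemma pi_fv (a : ZMod v) :
    ZMod.castHom (dvd_mul_right v u) (ZMod v) (fv v u a) = a := by
  simp [fv, map_natCast, ZMod.natCast_zmod_val]

lemma pi_gv (i : ZMod u) :
    ZMod.castHom (dvd_mul_right v u) (ZMod v) (gv v u i) = 0 := by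
  rw [gv, map_natCast, Nat.cast_mul, ZMod.natCast_self, zero_mul]

lemma pi_fg (a : ZMod v) (i : ZMod u) :
    ZMod.castHom (dvd_mul_right v u) (ZMod v) (fv v u a + gv v u i) = a := by
  rw [map_add, pi_fv, pi_gv, add_zero]

lemma gv_add (i j : ZMod u) : gv v u (i + j) = gv v u i + gv v u j := by
  unfold gv
  rw [← Nat.cast_add, ← Nat.mul_add]
  refine (ZMod.natCast_eq_natCast_iff _ _ _).mpr (Nat.ModEq.mul_left' _ ?_)
  rw [ZMod.val_add]
  exact (Nat.mod_modEq _ u)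

lemma gv_zero : gv v u 0 = 0 := by
  simp [gv]

lemma gv_neg (i : ZMod u) : gv v u (-i) = - gv v u i := by
  have := gv_add v u (-i) i
  rw [neg_add_cancel, gv_zero] at this
  exact eq_neg_of_add_eq_zero_left this.symm

lemma gv_inj : Function.Injective (gv v u) := by
  intro i j h
  have h' : v * i.val ≡ v * j.val [MOD v * u] := (ZMod.natCast_eq_natCast_iff _ _ _).mp h
  have h'' : i.val ≡ j.val [MOD u] := Nat.ModEq.mul_left_cancel' (NeZero.ne v) h'
  have : i.val = j.val := by
    have := h''
    unfold Nat.ModEq at this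
    rwa [Nat.mod_eq_of_lt (ZMod.val_lt i), Nat.mod_eq_of_lt (ZMod.val_lt j)] at this
  calc i = (i.val : ZMod u) := (ZMod.natCast_zmod_val i).symm
    _ = (j.val : ZMod u) := by rw [this]
    _ = j := ZMod.natCast_zmod_val j

lemma mem_range_gv {z : ZMod (v * u)}
    (hz : ZMod.castHom (dvd_mul_right v u) (ZMod v) z = 0) :
    ∃ i : ZMod u, gv v u i = z := by
  have hz' : ((z.val : ℕ) : ZMod v) = 0 := by
    rw [← map_natCast (ZMod.castHom (dvd_mul_right v u) (ZMod v)) z.val,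
      ZMod.natCast_zmod_val z]
    exact hz
  obtain ⟨m, hm⟩ := (ZMod.natCast_eq_zero_iff _ _).mp hz'
  have hmu : m < u := by
    have := ZMod.val_lt z
    rw [hm] at this
    exact lt_of_mul_lt_mul_left this (Nat.zero_le v)
  refine ⟨(m : ZMod u), ?_⟩
  rw [gv, ZMod.val_natCast, Nat.mod_eq_of_lt hmu, ← hm, ZMod.natCast_zmod_val z]

lemma sum_ind [dec : DecidableEq (ZMod (v * u))] [decv : DecidableEq (ZMod v)] (c : ZMod u) (hc : IsUnit c) (w z : ZMod (v * u)) :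
    (∑ i : ZMod u, if z = w + gv v u (c * i) then (1 : ℕ) else 0)
      = if ZMod.castHom (dvd_mul_right v u) (ZMod v) z
          = ZMod.castHom (dvd_mul_right v u) (ZMod v) w then 1 else 0 := by
  have hre : (∑ i : ZMod u, if z = w + gv v u (c * i) then (1 : ℕ) else 0)
      = ∑ i : ZMod u, if z = w + gv v u i then (1 : ℕ) else 0 := by
    refine Fintype.sum_bijective (fun i => c * i) ?_ _ _ (fun i => rfl)
    have := Units.mulLeft_bijective hc.unit
    simpa [hc.unit_spec] using this
  rw [hre]
  by_cases hzw : ZMod.castHom (dvd_mul_right v u) (ZMod v) z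
      = ZMod.castHom (dvd_mul_right v u) (ZMod v) w
  · have h0 : ZMod.castHom (dvd_mul_right v u) (ZMod v) (z - w) = 0 := by
      rw [map_sub, hzw, sub_self]
    obtain ⟨i₀, hi₀⟩ := mem_range_gv v u h0
    have hiff : ∀ i : ZMod u, (z = w + gv v u i) ↔ i = i₀ := by
      intro i
      constructor
      · intro h
        apply gv_inj v u
        rw [hi₀, h]; ring
      · rintro rfl
        rw [hi₀]; ring
    simp only [hiff, hzw, if_true]
    simp
  · rw [if_neg hzw]
    exact Finset.sum_eq_zero fun i _ =>
      if_neg (fun h => hzw (by rw [h, map_add, pi_gv, add_zero]))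

lemma count_four {α : Type*} [DecidableEq α] (z a b c d : α) :
    Multiset.count z ({a, b, c, d} : Multiset α)
      = (if z = a then 1 else 0) + (if z = b then 1 else 0)
        + (if z = c then 1 else 0) + (if z = d then 1 else 0) := by
  simp only [Multiset.insert_eq_cons, Multiset.count_cons, Multiset.count_singleton]
  split_ifs <;> omega

lemma mk4_eq {α : Type*} {a b c d a' b' c' d' : α}
    (h1 : a = a') (h2 : b = b') (h3 : c = c') (h4 : d = d') :
    ({a, b, c, d} : Multiset α) = {a', b', c', d'} := by
  rw [h1, h2, h3, h4]

/-- The transfer lemma: lifting each pair of `S` by all `u` kernel translates. -/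
lemma transfer [decu : DecidableEq (ZMod (v * u))] [decv : DecidableEq (ZMod v)]
    (S : Finset (ZMod v × ZMod v)) (A : Set (ZMod v))
    (b₁ b₂ b₃ b₄ : ZMod v × ZMod v → ZMod (v * u))
    (c₁ c₂ c₃ c₄ : ZMod u)
    (hc₁ : IsUnit c₁) (hc₂ : IsUnit c₂) (hc₃ : IsUnit c₃) (hc₄ : IsUnit c₄)
    (horig : ∀ z₀ : ZMod v,
      (S.val.bind fun p =>
        ({ZMod.castHom (dvd_mul_right v u) (ZMod v) (b₁ p),
          ZMod.castHom (dvd_mul_right v u) (ZMod v) (b₂ p),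
          ZMod.castHom (dvd_mul_right v u) (ZMod v) (b₃ p),
          ZMod.castHom (dvd_mul_right v u) (ZMod v) (b₄ p)} : Multiset (ZMod v))).count z₀
        = if z₀ ∈ A then 0 else 1)
    (E : (ZMod v × ZMod v) × ZMod u ↪ ZMod (v * u) × ZMod (v * u))
    (m : ZMod (v * u) × ZMod (v * u) → Multiset (ZMod (v * u)))
    (hm : ∀ p i, m (E (p, i)) =
      ({b₁ p + gv v u (c₁ * i), b₂ p + gv v u (c₂ * i),
        b₃ p + gv v u (c₃ * i), b₄ p + gv v u (c₄ * i)} : Multiset (ZMod (v * u))))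
    (z : ZMod (v * u)) :
    (((S ×ˢ Finset.univ).map E).val.bind m).count z
      = if ZMod.castHom (dvd_mul_right v u) (ZMod v) z ∈ A then 0 else 1 := by
  rw [Finset.map_val, Multiset.bind_map, Multiset.count_bind]
  have step1 : Multiset.sum (Multiset.map (fun q => Multiset.count z (m (E q)))
        (S ×ˢ Finset.univ).val)
      = ∑ q ∈ S ×ˢ Finset.univ, Multiset.count z (m (E q)) := rfl
  rw [step1, Finset.sum_product]
  have inner : ∀ p ∈ S, (∑ i : ZMod u, Multiset.count z (m (E (p, i))))
      = (if ZMod.castHom (dvd_mul_right v u) (ZMod v) z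
            = ZMod.castHom (dvd_mul_right v u) (ZMod v) (b₁ p) then 1 else 0)
        + (if ZMod.castHom (dvd_mul_right v u) (ZMod v) z
            = ZMod.castHom (dvd_mul_right v u) (ZMod v) (b₂ p) then 1 else 0)
        + (if ZMod.castHom (dvd_mul_right v u) (ZMod v) z
            = ZMod.castHom (dvd_mul_right v u) (ZMod v) (b₃ p) then 1 else 0)
        + (if ZMod.castHom (dvd_mul_right v u) (ZMod v) z
            = ZMod.castHom (dvd_mul_right v u) (ZMod v) (b₄ p) then 1 else 0) := by
    intro p _
    have expand : (∑ i : ZMod u, Multiset.count z (m (E (p, i))))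
        = (∑ i : ZMod u, if z = b₁ p + gv v u (c₁ * i) then 1 else 0)
          + (∑ i : ZMod u, if z = b₂ p + gv v u (c₂ * i) then 1 else 0)
          + (∑ i : ZMod u, if z = b₃ p + gv v u (c₃ * i) then 1 else 0)
          + (∑ i : ZMod u, if z = b₄ p + gv v u (c₄ * i) then 1 else 0) := by
      rw [← Finset.sum_add_distrib, ← Finset.sum_add_distrib, ← Finset.sum_add_distrib]
      exact Finset.sum_congr rfl fun i _ => by rw [hm, count_four]
    rw [expand, sum_ind v u c₁ hc₁, sum_ind v u c₂ hc₂, sum_ind v u c₃ hc₃,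
      sum_ind v u c₄ hc₄]
  rw [Finset.sum_congr rfl inner]
  have back : (∑ p ∈ S,
      ((if ZMod.castHom (dvd_mul_right v u) (ZMod v) z
            = ZMod.castHom (dvd_mul_right v u) (ZMod v) (b₁ p) then 1 else 0)
        + (if ZMod.castHom (dvd_mul_right v u) (ZMod v) z
            = ZMod.castHom (dvd_mul_right v u) (ZMod v) (b₂ p) then 1 else 0)
        + (if ZMod.castHom (dvd_mul_right v u) (ZMod v) z
            = ZMod.castHom (dvd_mul_right v u) (ZMod v) (b₃ p) then 1 else 0)
        + (if ZMod.castHom (dvd_mul_right v u) (ZMod v) z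
            = ZMod.castHom (dvd_mul_right v u) (ZMod v) (b₄ p) then 1 else 0)))
      = (S.val.bind fun p =>
        ({ZMod.castHom (dvd_mul_right v u) (ZMod v) (b₁ p),
          ZMod.castHom (dvd_mul_right v u) (ZMod v) (b₂ p),
          ZMod.castHom (dvd_mul_right v u) (ZMod v) (b₃ p),
          ZMod.castHom (dvd_mul_right v u) (ZMod v) (b₄ p)} : Multiset (ZMod v))).count
          (ZMod.castHom (dvd_mul_right v u) (ZMod v) z) := by
    rw [Multiset.count_bind]
    exact (Finset.sum_congr rfl fun p _ => by rw [count_four]).symm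
  rw [back, horig]

end PPSaux

theorem stmt7 (u v : ℕ) (hu : 0 < u) (hv : 0 < v) (hgcd : Nat.gcd u 6 = 1)
    (A₁ A₂ : Set (ZMod v)) (hcard : A₁.ncard = A₂.ncard)
    (h : ∃ S : Finset (ZMod v × ZMod v), IsPPS A₁ A₂ S) :
    ∃ S : Finset (ZMod (v * u) × ZMod (v * u)),
      IsPPS ((ZMod.castHom (dvd_mul_right v u) (ZMod v)) ⁻¹' A₁)
            ((ZMod.castHom (dvd_mul_right v u) (ZMod v)) ⁻¹' A₂) S := by
  haveI : NeZero v := ⟨hv.ne'⟩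
  haveI : NeZero u := ⟨hu.ne'⟩
  obtain ⟨S, hS1, hS2⟩ := h
  have hco : ∀ m : ℕ, m ∣ 6 → IsUnit ((m : ℕ) : ZMod u) := fun m hm =>
    (ZMod.isUnit_iff_coprime m u).mpr
      (Nat.Coprime.symm ((Nat.coprime_iff_gcd_eq_one.mpr hgcd).coprime_dvd_right hm))
  have h2 : IsUnit (2 : ZMod u) := by have := hco 2 (by norm_num); simpa using this
  have h3 : IsUnit (3 : ZMod u) := by have := hco 3 (by norm_num); simpa using this
  set F : (ZMod v × ZMod v) × ZMod u → ZMod (v * u) × ZMod (v * u) :=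
    fun q => (PPSaux.fv v u q.1.1 + PPSaux.gv v u q.2,
              PPSaux.fv v u q.1.2 + PPSaux.gv v u (2 * q.2)) with hFdef
  have hFinj : Function.Injective F := by
    rintro ⟨⟨a, b⟩, i⟩ ⟨⟨a', b'⟩, j⟩ hq
    simp only [hFdef, Prod.mk.injEq] at hq
    obtain ⟨h1, h2'⟩ := hq
    have ha : a = a' := by
      have := congrArg (ZMod.castHom (dvd_mul_right v u) (ZMod v)) h1
      rwa [PPSaux.pi_fg, PPSaux.pi_fg] at this
    have hb : b = b' := by
      have := congrArg (ZMod.castHom (dvd_mul_right v u) (ZMod v)) h2'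
      rwa [PPSaux.pi_fg, PPSaux.pi_fg] at this
    have hi : i = j := by
      subst ha
      exact PPSaux.gv_inj v u (add_left_cancel h1)
    simp [ha, hb, hi]
  refine ⟨(S ×ˢ Finset.univ).map ⟨F, hFinj⟩, fun z => ?_, fun z => ?_⟩
  · have := PPSaux.transfer (decu := fun a b => Classical.propDecidable (a = b))
      (decv := fun a b => Classical.propDecidable (a = b)) v u S A₁
      (fun p => PPSaux.fv v u p.1) (fun p => -PPSaux.fv v u p.1)
      (fun p => PPSaux.fv v u p.2) (fun p => -PPSaux.fv v u p.2)
      1 (-1) 2 (-2) isUnit_one isUnit_one.neg h2 h2.neg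
      (fun z₀ => by
        simp only [map_neg, PPSaux.pi_fv]
        exact hS1 z₀)
      ⟨F, hFinj⟩ (fun q => ({q.1, -q.1, q.2, -q.2} : Multiset (ZMod (v * u))))
      (fun p i => by
        show ({F (p, i) |>.1, -(F (p, i)).1, (F (p, i)).2, -(F (p, i)).2} : Multiset _) = _
        simp only [hFdef]
        have hg1 : PPSaux.gv v u ((1 : ZMod u) * i) = PPSaux.gv v u i := by rw [one_mul]
        have hgn1 : PPSaux.gv v u ((-1 : ZMod u) * i) = -PPSaux.gv v u i := by
          rw [show ((-1 : ZMod u)) * i = -i by ring, PPSaux.gv_neg]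
        have hgn2 : PPSaux.gv v u ((-2 : ZMod u) * i) = -PPSaux.gv v u (2 * i) := by
          rw [show ((-2 : ZMod u)) * i = -(2 * i) by ring, PPSaux.gv_neg]
        refine PPSaux.mk4_eq ?_ ?_ ?_ ?_
        · rw [hg1]
        · rw [hgn1]; ring
        · rfl
        · rw [hgn2]; ring) z
    exact this
  · have := PPSaux.transfer (decu := fun a b => Classical.propDecidable (a = b))
      (decv := fun a b => Classical.propDecidable (a = b)) v u S A₂
      (fun p => PPSaux.fv v u p.1 + PPSaux.fv v u p.2)
      (fun p => -(PPSaux.fv v u p.1 + PPSaux.fv v u p.2))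
      (fun p => PPSaux.fv v u p.1 - PPSaux.fv v u p.2)
      (fun p => -(PPSaux.fv v u p.1 - PPSaux.fv v u p.2))
      3 (-3) (-1) 1 h3 h3.neg isUnit_one.neg isUnit_one
      (fun z₀ => by
        simp only [map_neg, map_add, map_sub, PPSaux.pi_fv]
        exact hS2 z₀)
      ⟨F, hFinj⟩
      (fun q => ({q.1 + q.2, -(q.1 + q.2), q.1 - q.2, -(q.1 - q.2)} :
        Multiset (ZMod (v * u))))
      (fun p i => by
        show ({(F (p, i)).1 + (F (p, i)).2, -((F (p, i)).1 + (F (p, i)).2),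
          (F (p, i)).1 - (F (p, i)).2, -((F (p, i)).1 - (F (p, i)).2)} : Multiset _) = _
        simp only [hFdef]
        have hg2 : PPSaux.gv v u ((2 : ZMod u) * i)
            = PPSaux.gv v u i + PPSaux.gv v u i := by
          rw [show ((2 : ZMod u)) * i = i + i by ring, PPSaux.gv_add]
        have hg3 : PPSaux.gv v u ((3 : ZMod u) * i)
            = PPSaux.gv v u i + PPSaux.gv v u i + PPSaux.gv v u i := by
          rw [show ((3 : ZMod u)) * i = i + (i + i) by ring, PPSaux.gv_add,
            PPSaux.gv_add]
          ring
        have hgn3 : PPSaux.gv v u ((-3 : ZMod u) * i)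
            = -(PPSaux.gv v u i + PPSaux.gv v u i + PPSaux.gv v u i) := by
          rw [show ((-3 : ZMod u)) * i = -((3 : ZMod u) * i) by ring, PPSaux.gv_neg, hg3]
        have hgn1 : PPSaux.gv v u ((-1 : ZMod u) * i) = -PPSaux.gv v u i := by
          rw [show ((-1 : ZMod u)) * i = -i by ring, PPSaux.gv_neg]
        have hg1 : PPSaux.gv v u ((1 : ZMod u) * i) = PPSaux.gv v u i := by rw [one_mul]
        refine PPSaux.mk4_eq ?_ ?_ ?_ ?_
        · rw [hg3, hg2]; ring
        · rw [hgn3, hg2]; ring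
        · rw [hgn1, hg2]; ring
        · rw [hg1, hg2]; ring) z
    exact this
end

section
/- Let v ≡ 1 (mod 4) and u ≡ 7 or 11 (mod 12) be positive integers, and let α, β be nonzero elements of Z_u. If there exist a PS(v) and an APS(u,α,β), then there exists an APS(vu, v·α', v·β'), where α' and β' are integer lifts of α and β and v·α', v·β' are taken as elements of Z_{vu} (these are well defined modulo vu). -/
open scoped Classical

section Aux

variable (v u : ℕ)

/-- The injective additive map `ZMod u →+ ZMod (v*u)`, `w ↦ v * w̃`. -/
private def psiH [NeZero u] : ZMod u →+ ZMod (v * u) :=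
  AddMonoidHom.mk' (fun w => ((v * w.val : ℕ) : ZMod (v * u)))
    (fun a b => by
      rw [← Nat.cast_add, ZMod.natCast_eq_natCast_iff]
      calc v * (a + b).val = v * ((a.val + b.val) % u) := by rw [ZMod.val_add]
        _ ≡ v * (a.val + b.val) [MOD v * u] := Nat.ModEq.mul_left' v (Nat.mod_modEq _ u)
        _ = v * a.val + v * b.val := by ring)

private lemma psi_val [NeZero u] (w : ZMod u) :
    psiH v u w = (v : ZMod (v * u)) * ((w.val : ℕ) : ZMod (v * u)) := by
  show ((v * w.val : ℕ) : ZMod (v * u)) = _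
  push_cast
  rfl

private lemma psi_inj [NeZero v] [NeZero u] : Function.Injective (psiH v u) := by
  rw [injective_iff_map_eq_zero]
  intro w hw
  have hw' : ((v * w.val : ℕ) : ZMod (v * u)) = 0 := hw
  rw [ZMod.natCast_eq_zero_iff] at hw'
  have hdvd : u ∣ w.val :=
    (Nat.mul_dvd_mul_iff_left (Nat.pos_of_ne_zero (NeZero.ne v))).mp hw'
  have h0 : w.val = 0 := Nat.eq_zero_of_dvd_of_lt hdvd (ZMod.val_lt w)
  exact (ZMod.val_eq_zero w).mp h0

private lemma pi_psi [NeZero u] (w : ZMod u) :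
    (ZMod.castHom (dvd_mul_right v u) (ZMod v)) (psiH v u w) = 0 := by
  show (ZMod.castHom (dvd_mul_right v u) (ZMod v)) (((v * w.val : ℕ) : ZMod (v * u))) = 0
  rw [map_natCast]
  exact (ZMod.natCast_eq_zero_iff _ v).mpr ⟨w.val, rfl⟩

private lemma pi_phi [NeZero v] (x : ZMod v) :
    (ZMod.castHom (dvd_mul_right v u) (ZMod v)) ((x.val : ℕ) : ZMod (v * u)) = x := by
  rw [map_natCast]
  exact ZMod.natCast_rightInverse x

private lemma psi_surj [NeZero v] [NeZero u] (z : ZMod (v * u))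
    (hz : (ZMod.castHom (dvd_mul_right v u) (ZMod v)) z = 0) : ∃ w, psiH v u w = z := by
  haveI : NeZero (v * u) := ⟨Nat.mul_ne_zero (NeZero.ne v) (NeZero.ne u)⟩
  have hz0 : ((z.val : ℕ) : ZMod (v * u)) = z := ZMod.natCast_rightInverse z
  have hz' : ((z.val : ℕ) : ZMod v) = 0 := by
    rw [← map_natCast (ZMod.castHom (dvd_mul_right v u) (ZMod v)) z.val, hz0, hz]
  obtain ⟨t, ht⟩ := (ZMod.natCast_eq_zero_iff z.val v).mp hz'
  have htu : t < u := by
    have h := ZMod.val_lt z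
    rw [ht] at h
    exact Nat.lt_of_mul_lt_mul_left h
  refine ⟨(t : ZMod u), ?_⟩
  show ((v * ((t : ZMod u)).val : ℕ) : ZMod (v * u)) = z
  rw [ZMod.val_cast_of_lt htu, ← ht, hz0]

private lemma key [NeZero v] [NeZero u] (a z : ZMod (v * u)) (e : ZMod u → ZMod u)
    (he : Function.Bijective e) :
    (∑ j : ZMod u, if z = a + psiH v u (e j) then 1 else 0) =
      (if (ZMod.castHom (dvd_mul_right v u) (ZMod v)) z
          = (ZMod.castHom (dvd_mul_right v u) (ZMod v)) a then (1 : ℕ) else 0) := by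
  have h1 : (∑ j : ZMod u, if z = a + psiH v u (e j) then (1 : ℕ) else 0)
      = ∑ j : ZMod u, if z = a + psiH v u j then (1 : ℕ) else 0 :=
    Fintype.sum_bijective e he _ _ (fun x => rfl)
  rw [h1]
  by_cases h : (ZMod.castHom (dvd_mul_right v u) (ZMod v)) z
      = (ZMod.castHom (dvd_mul_right v u) (ZMod v)) a
  · obtain ⟨w, hw⟩ := psi_surj v u (z - a) (by rw [map_sub, h, sub_self])
    have hiff : ∀ j : ZMod u, (z = a + psiH v u j) ↔ (j = w) := by
      intro j
      constructor
      · intro hj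
        apply psi_inj v u
        rw [hw, hj]
        ring
      · rintro rfl
        rw [hw]
        ring
    simp only [hiff]
    rw [Finset.sum_ite_eq' Finset.univ w (fun _ => (1 : ℕ))]
    simp [h]
  · have hnone : ∀ j : ZMod u, ¬ (z = a + psiH v u j) := fun j hj =>
      h (by rw [hj, map_add, pi_psi, add_zero])
    simp only [hnone, if_false, Finset.sum_const_zero]
    rw [if_neg h]

private lemma key_neg [NeZero v] [NeZero u] (a z : ZMod (v * u)) (e : ZMod u → ZMod u)
    (he : Function.Bijective e) :
    (∑ j : ZMod u, if z = -(a + psiH v u (e j)) then 1 else 0) =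
      (if (ZMod.castHom (dvd_mul_right v u) (ZMod v)) z
          = -((ZMod.castHom (dvd_mul_right v u) (ZMod v)) a) then (1 : ℕ) else 0) := by
  have h1 : ∀ j : ZMod u, (z = -(a + psiH v u (e j))) ↔ (-z = a + psiH v u (e j)) := by
    intro j
    rw [neg_eq_iff_eq_neg]
  simp only [h1]
  rw [key v u a (-z) e he, map_neg]
  simp only [neg_eq_iff_eq_neg]

private lemma count_quad {G : Type*} [DecidableEq G] (z a b c d : G) :
    Multiset.count z ({a, b, c, d} : Multiset G)
      = (if z = a then 1 else 0) + (if z = b then 1 else 0)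
        + (if z = c then 1 else 0) + (if z = d then 1 else 0) := by
  simp only [Multiset.insert_eq_cons, Multiset.count_cons, Multiset.count_singleton]
  ring

private lemma count_bind_finset {β G : Type*} [DecidableEq G] (t : Finset β)
    (f : β → Multiset G) (z : G) :
    Multiset.count z (t.val.bind f) = ∑ b ∈ t, Multiset.count z (f b) := by
  rw [Multiset.count_bind]
  rfl

private lemma ite_irrel {σ : Type*} {c : Prop} (i1 i2 : Decidable c) (a b : σ) :
    @ite σ c i1 a b = @ite σ c i2 a b := by
  rw [Subsingleton.elim i1 i2]

private lemma ite_congr_all {σ : Type*} {c d : Prop} (i1 : Decidable c) (i2 : Decidable d)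
    (h : c ↔ d) (a b : σ) : @ite σ c i1 a b = @ite σ d i2 a b := by
  have hcd : c = d := propext h
  subst hcd
  rw [Subsingleton.elim i1 i2]

private lemma count_irrel {G : Type*} (i1 i2 : DecidableEq G) (z : G) (m : Multiset G) :
    @Multiset.count G i1 z m = @Multiset.count G i2 z m := by
  rw [Subsingleton.elim i1 i2]

/-- first coordinates of lifted pairs from `ZMod u`. -/
private def gOne [NeZero u] (p : ZMod u × ZMod u) : ZMod (v * u) × ZMod (v * u) :=
  (psiH v u p.1, psiH v u p.2)

/-- expanded pairs from `ZMod v` pairs. -/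
private def gTwo [NeZero u] (q : (ZMod v × ZMod v) × ZMod u) : ZMod (v * u) × ZMod (v * u) :=
  (((q.1.1.val : ℕ) : ZMod (v * u)) + psiH v u q.2,
   ((q.1.2.val : ℕ) : ZMod (v * u)) + psiH v u (2 * q.2))

end Aux

theorem stmt8 (v u : ℕ) (hv : v % 4 = 1) (hu : u % 12 = 7 ∨ u % 12 = 11)
    (α β : ZMod u) (hα : α ≠ 0) (hβ : β ≠ 0)
    (hPS : ∃ S : Finset (ZMod v × ZMod v), IsPS v S)
    (hAPS : ∃ S : Finset (ZMod u × ZMod u), IsAPS u α β S) :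
    ∃ S : Finset (ZMod (v * u) × ZMod (v * u)),
      IsAPS (v * u) ((v : ZMod (v * u)) * ((α.val : ℕ) : ZMod (v * u)))
                    ((v : ZMod (v * u)) * ((β.val : ℕ) : ZMod (v * u))) S := by
  haveI : NeZero v := ⟨by omega⟩
  haveI : NeZero u := ⟨by rcases hu with h | h <;> omega⟩
  haveI : NeZero (v * u) := ⟨Nat.mul_ne_zero (NeZero.ne v) (NeZero.ne u)⟩
  obtain ⟨Sv, hSv1, hSv2⟩ := hPS
  obtain ⟨Su, hSu1, hSu2⟩ := hAPS
  -- bijections of ZMod u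
  have hbijid : Function.Bijective (fun j : ZMod u => j) := Function.bijective_id
  have h2u : IsUnit (2 : ZMod u) := by
    have h2 : ((2 : ℕ) : ZMod u) = 2 := by norm_num
    rw [← h2, ZMod.isUnit_iff_coprime]
    exact Nat.prime_two.coprime_iff_not_dvd.mpr (by omega)
  have h3u : IsUnit (3 : ZMod u) := by
    have h3 : ((3 : ℕ) : ZMod u) = 3 := by norm_num
    rw [← h3, ZMod.isUnit_iff_coprime]
    exact Nat.prime_three.coprime_iff_not_dvd.mpr (by omega)
  have hbij2 : Function.Bijective (fun j : ZMod u => 2 * j) := by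
    obtain ⟨c, hc⟩ := h2u
    rw [← hc]
    exact (Units.mulLeft c).bijective
  have hbij3 : Function.Bijective (fun j : ZMod u => 3 * j) := by
    obtain ⟨c, hc⟩ := h3u
    rw [← hc]
    exact (Units.mulLeft c).bijective
  have hbijneg : Function.Bijective (fun j : ZMod u => -j) := neg_involutive.bijective
  have hSv1' : ∀ z : ZMod v, Multiset.count z
      (Sv.val.bind fun p => ({p.1, -p.1, p.2, -p.2} : Multiset (ZMod v)))
      = if z ∈ ({0} : Set (ZMod v)) then 0 else 1 := fun z =>
    ((count_irrel _ _ z _).trans (hSv1 z)).trans (ite_irrel _ _ _ _)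
  have hSv2' : ∀ z : ZMod v, Multiset.count z
      (Sv.val.bind fun p => ({p.1 + p.2, -(p.1 + p.2), p.1 - p.2, -(p.1 - p.2)} : Multiset (ZMod v)))
      = if z ∈ ({0} : Set (ZMod v)) then 0 else 1 := fun z =>
    ((count_irrel _ _ z _).trans (hSv2 z)).trans (ite_irrel _ _ _ _)
  have hSu1' : ∀ z : ZMod u, Multiset.count z
      (Su.val.bind fun p => ({p.1, -p.1, p.2, -p.2} : Multiset (ZMod u)))
      = if z ∈ ({0, α, -α} : Set (ZMod u)) then 0 else 1 := fun z =>
    ((count_irrel _ _ z _).trans (hSu1 z)).trans (ite_irrel _ _ _ _)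
  have hSu2' : ∀ z : ZMod u, Multiset.count z
      (Su.val.bind fun p => ({p.1 + p.2, -(p.1 + p.2), p.1 - p.2, -(p.1 - p.2)} : Multiset (ZMod u)))
      = if z ∈ ({0, β, -β} : Set (ZMod u)) then 0 else 1 := fun z =>
    ((count_irrel _ _ z _).trans (hSu2 z)).trans (ite_irrel _ _ _ _)
  -- first components of pairs in Sv are nonzero
  have hne1 : ∀ p ∈ Sv, p.1 ≠ 0 := by
    intro p hp h0
    have hm : (0 : ZMod v) ∈ Sv.val.bind fun p => ({p.1, -p.1, p.2, -p.2} : Multiset (ZMod v)) :=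
      Multiset.mem_bind.mpr ⟨p, Finset.mem_val.mpr hp, by simp [h0]⟩
    apply Multiset.count_ne_zero.mpr hm
    rw [hSv1' 0]
    simp
  -- injectivity of gOne on Su
  have hg1inj : ∀ x ∈ Su, ∀ y ∈ Su, gOne v u x = gOne v u y → x = y := by
    intro p _ q _ h
    have h1 : psiH v u p.1 = psiH v u q.1 := congrArg Prod.fst h
    have h2 : psiH v u p.2 = psiH v u q.2 := congrArg Prod.snd h
    exact Prod.ext (psi_inj v u h1) (psi_inj v u h2)
  -- injectivity of gTwo
  have hg2inj : ∀ x ∈ Sv ×ˢ (Finset.univ : Finset (ZMod u)),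
      ∀ y ∈ Sv ×ˢ (Finset.univ : Finset (ZMod u)), gTwo v u x = gTwo v u y → x = y := by
    rintro ⟨⟨x, y⟩, j⟩ - ⟨⟨x', y'⟩, j'⟩ - h
    simp only [gTwo, Prod.mk.injEq] at h
    obtain ⟨h1, h2⟩ := h
    have hx : x = x' := by
      have h3 := congrArg (ZMod.castHom (dvd_mul_right v u) (ZMod v)) h1
      rwa [map_add, map_add, pi_psi, pi_psi, add_zero, add_zero, pi_phi, pi_phi] at h3
    subst hx
    have hj : j = j' := psi_inj v u (add_left_cancel h1)
    have hy : y = y' := by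
      have h3 := congrArg (ZMod.castHom (dvd_mul_right v u) (ZMod v)) h2
      rwa [map_add, map_add, pi_psi, pi_psi, add_zero, add_zero, pi_phi, pi_phi] at h3
    subst hj; subst hy; rfl
  -- disjointness
  have hdisj : Disjoint (Su.image (gOne v u))
      (((Sv ×ˢ (Finset.univ : Finset (ZMod u))).image (gTwo v u))) := by
    rw [Finset.disjoint_left]
    rintro a ha hb
    obtain ⟨p, hp, rfl⟩ := Finset.mem_image.mp ha
    obtain ⟨q, hq, hqe⟩ := Finset.mem_image.mp hb
    have h1 : (ZMod.castHom (dvd_mul_right v u) (ZMod v)) (gOne v u p).1 = 0 := pi_psi v u p.1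
    have h2 : (ZMod.castHom (dvd_mul_right v u) (ZMod v)) (gTwo v u q).1 = q.1.1 := by
      simp only [gTwo]
      rw [map_add, pi_psi, add_zero, pi_phi]
    exact hne1 q.1 (Finset.mem_product.mp hq).1 (by rw [← h2, hqe, h1])
  refine ⟨(Su.image (gOne v u)).disjUnion
    ((Sv ×ˢ (Finset.univ : Finset (ZMod u))).image (gTwo v u)) hdisj, ?_, ?_⟩
  · -- first condition
    rw [show (v : ZMod (v * u)) * ((α.val : ℕ) : ZMod (v * u)) = psiH v u α from
      (psi_val v u α).symm]
    intro z
    refine (count_irrel _ inferInstance z _).trans ?_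
    rw [show ((Su.image (gOne v u)).disjUnion
        ((Sv ×ˢ (Finset.univ : Finset (ZMod u))).image (gTwo v u)) hdisj).val
        = (Su.image (gOne v u)).val
          + ((Sv ×ˢ (Finset.univ : Finset (ZMod u))).image (gTwo v u)).val from rfl]
    rw [Multiset.add_bind, Multiset.count_add, count_bind_finset, count_bind_finset,
      Finset.sum_image hg1inj, Finset.sum_image hg2inj, Finset.sum_product]
    beta_reduce
    have hB : (∑ x ∈ Sv, ∑ j : ZMod u, Multiset.count z
          (({(gTwo v u (x, j)).1, -(gTwo v u (x, j)).1, (gTwo v u (x, j)).2,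
            -(gTwo v u (x, j)).2} : Multiset (ZMod (v * u)))))
        = if (ZMod.castHom (dvd_mul_right v u) (ZMod v)) z = 0 then 0 else 1 := by
      have hterm : ∀ p ∈ Sv, (∑ j : ZMod u, Multiset.count z
          (({(gTwo v u (p, j)).1, -(gTwo v u (p, j)).1, (gTwo v u (p, j)).2,
            -(gTwo v u (p, j)).2} : Multiset (ZMod (v * u)))))
          = Multiset.count ((ZMod.castHom (dvd_mul_right v u) (ZMod v)) z)
              ({p.1, -p.1, p.2, -p.2} : Multiset (ZMod v)) := by
        intro p _
        have e1 : (∑ j : ZMod u, if z = ((p.1.val : ℕ) : ZMod (v * u)) + psiH v u j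
              then (1 : ℕ) else 0)
            = if (ZMod.castHom (dvd_mul_right v u) (ZMod v)) z = p.1 then 1 else 0 :=
          (key v u _ z (fun j => j) hbijid).trans (by rw [pi_phi])
        have e2 : (∑ j : ZMod u, if z = -(((p.1.val : ℕ) : ZMod (v * u)) + psiH v u j)
              then (1 : ℕ) else 0)
            = if (ZMod.castHom (dvd_mul_right v u) (ZMod v)) z = -p.1 then 1 else 0 :=
          (key_neg v u _ z (fun j => j) hbijid).trans (by rw [pi_phi])
        have e3 : (∑ j : ZMod u, if z = ((p.2.val : ℕ) : ZMod (v * u)) + psiH v u (2 * j)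
              then (1 : ℕ) else 0)
            = if (ZMod.castHom (dvd_mul_right v u) (ZMod v)) z = p.2 then 1 else 0 :=
          (key v u _ z (fun j => 2 * j) hbij2).trans (by rw [pi_phi])
        have e4 : (∑ j : ZMod u, if z = -(((p.2.val : ℕ) : ZMod (v * u)) + psiH v u (2 * j))
              then (1 : ℕ) else 0)
            = if (ZMod.castHom (dvd_mul_right v u) (ZMod v)) z = -p.2 then 1 else 0 :=
          (key_neg v u _ z (fun j => 2 * j) hbij2).trans (by rw [pi_phi])
        simp only [gTwo, count_quad]
        rw [Finset.sum_add_distrib, Finset.sum_add_distrib, Finset.sum_add_distrib,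
          e1, e2, e3, e4]
      rw [Finset.sum_congr rfl hterm]
      have hc : Multiset.count ((ZMod.castHom (dvd_mul_right v u) (ZMod v)) z)
          (Sv.val.bind fun p => ({p.1, -p.1, p.2, -p.2} : Multiset (ZMod v)))
          = ∑ p ∈ Sv, Multiset.count ((ZMod.castHom (dvd_mul_right v u) (ZMod v)) z)
              ({p.1, -p.1, p.2, -p.2} : Multiset (ZMod v)) := count_bind_finset _ _ _
      rw [← hc, hSv1']
      exact ite_congr_all _ _ Set.mem_singleton_iff _ _
    rw [hB]
    by_cases h0 : (ZMod.castHom (dvd_mul_right v u) (ZMod v)) z = 0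
    · obtain ⟨w, rfl⟩ := psi_surj v u z h0
      rw [if_pos h0]
      have hA : (∑ p ∈ Su, Multiset.count (psiH v u w)
            (({(gOne v u p).1, -(gOne v u p).1, (gOne v u p).2,
              -(gOne v u p).2} : Multiset (ZMod (v * u)))))
          = if w ∈ ({0, α, -α} : Set (ZMod u)) then 0 else 1 := by
        have hterm2 : ∀ p ∈ Su, Multiset.count (psiH v u w)
            (({(gOne v u p).1, -(gOne v u p).1, (gOne v u p).2,
              -(gOne v u p).2} : Multiset (ZMod (v * u))))
            = Multiset.count w ({p.1, -p.1, p.2, -p.2} : Multiset (ZMod u)) := by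
          intro p _
          simp only [gOne, count_quad, ← map_neg (psiH v u), (psi_inj v u).eq_iff]
        rw [Finset.sum_congr rfl hterm2]
        have hc2 : Multiset.count w
            (Su.val.bind fun p => ({p.1, -p.1, p.2, -p.2} : Multiset (ZMod u)))
            = ∑ p ∈ Su, Multiset.count w ({p.1, -p.1, p.2, -p.2} : Multiset (ZMod u)) :=
          count_bind_finset _ _ _
        rw [← hc2, hSu1']
      rw [hA, add_zero]
      have hmem : (psiH v u w ∈ ({0, psiH v u α, -psiH v u α} : Set (ZMod (v * u))))
          ↔ (w ∈ ({0, α, -α} : Set (ZMod u))) := by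
        simp only [Set.mem_insert_iff, Set.mem_singleton_iff]
        rw [show (0 : ZMod (v * u)) = psiH v u 0 from (map_zero _).symm,
          ← map_neg (psiH v u) α]
        simp only [(psi_inj v u).eq_iff]
      exact ite_congr_all _ _ hmem.symm _ _
    · rw [if_neg h0]
      have hA0 : (∑ p ∈ Su, Multiset.count z
            (({(gOne v u p).1, -(gOne v u p).1, (gOne v u p).2,
              -(gOne v u p).2} : Multiset (ZMod (v * u))))) = 0 := by
        refine Finset.sum_eq_zero ?_
        intro p _
        simp only [gOne]
        rw [count_quad,
          if_neg (fun h => h0 (by rw [h]; exact pi_psi v u p.1)),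
          if_neg (fun h => h0 (by rw [h, map_neg, pi_psi, neg_zero])),
          if_neg (fun h => h0 (by rw [h]; exact pi_psi v u p.2)),
          if_neg (fun h => h0 (by rw [h, map_neg, pi_psi, neg_zero]))]
        rfl
      rw [hA0, zero_add]
      have hnm : ¬ (z ∈ ({0, psiH v u α, -psiH v u α} : Set (ZMod (v * u)))) := by
        intro hmem
        simp only [Set.mem_insert_iff, Set.mem_singleton_iff] at hmem
        rcases hmem with h | h | h
        · exact h0 (by rw [h, map_zero])
        · exact h0 (by rw [h]; exact pi_psi v u α)
        · exact h0 (by rw [h, map_neg, pi_psi, neg_zero])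
      exact (if_neg hnm).symm
  · -- second condition
    rw [show (v : ZMod (v * u)) * ((β.val : ℕ) : ZMod (v * u)) = psiH v u β from
      (psi_val v u β).symm]
    intro z
    refine (count_irrel _ inferInstance z _).trans ?_
    rw [show ((Su.image (gOne v u)).disjUnion
        ((Sv ×ˢ (Finset.univ : Finset (ZMod u))).image (gTwo v u)) hdisj).val
        = (Su.image (gOne v u)).val
          + ((Sv ×ˢ (Finset.univ : Finset (ZMod u))).image (gTwo v u)).val from rfl]
    rw [Multiset.add_bind, Multiset.count_add, count_bind_finset, count_bind_finset,
      Finset.sum_image hg1inj, Finset.sum_image hg2inj, Finset.sum_product]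
    beta_reduce
    have hB : (∑ x ∈ Sv, ∑ j : ZMod u, Multiset.count z
          (({(gTwo v u (x, j)).1 + (gTwo v u (x, j)).2,
            -((gTwo v u (x, j)).1 + (gTwo v u (x, j)).2),
            (gTwo v u (x, j)).1 - (gTwo v u (x, j)).2,
            -((gTwo v u (x, j)).1 - (gTwo v u (x, j)).2)} : Multiset (ZMod (v * u)))))
        = if (ZMod.castHom (dvd_mul_right v u) (ZMod v)) z = 0 then 0 else 1 := by
      have hterm : ∀ p ∈ Sv, (∑ j : ZMod u, Multiset.count z
          (({(gTwo v u (p, j)).1 + (gTwo v u (p, j)).2,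
            -((gTwo v u (p, j)).1 + (gTwo v u (p, j)).2),
            (gTwo v u (p, j)).1 - (gTwo v u (p, j)).2,
            -((gTwo v u (p, j)).1 - (gTwo v u (p, j)).2)} : Multiset (ZMod (v * u)))))
          = Multiset.count ((ZMod.castHom (dvd_mul_right v u) (ZMod v)) z)
              ({p.1 + p.2, -(p.1 + p.2), p.1 - p.2, -(p.1 - p.2)} : Multiset (ZMod v)) := by
        intro p _
        have hrws : ∀ j : ZMod u, (((p.1.val : ℕ) : ZMod (v * u)) + psiH v u j)
              + (((p.2.val : ℕ) : ZMod (v * u)) + psiH v u (2 * j))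
            = (((p.1.val : ℕ) : ZMod (v * u)) + ((p.2.val : ℕ) : ZMod (v * u)))
              + psiH v u (3 * j) := by
          intro j
          have h : psiH v u j + psiH v u (2 * j) = psiH v u (3 * j) := by
            rw [← map_add]
            congr 1
            ring
          rw [← h]
          ring
        have hrwd : ∀ j : ZMod u, (((p.1.val : ℕ) : ZMod (v * u)) + psiH v u j)
              - (((p.2.val : ℕ) : ZMod (v * u)) + psiH v u (2 * j))
            = (((p.1.val : ℕ) : ZMod (v * u)) - ((p.2.val : ℕ) : ZMod (v * u)))
              + psiH v u (-j) := by
          intro j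
          have h : psiH v u j - psiH v u (2 * j) = psiH v u (-j) := by
            rw [← map_sub]
            congr 1
            ring
          rw [← h]
          ring
        have e1 : (∑ j : ZMod u, if z = (((p.1.val : ℕ) : ZMod (v * u)) + psiH v u j)
              + (((p.2.val : ℕ) : ZMod (v * u)) + psiH v u (2 * j)) then (1 : ℕ) else 0)
            = if (ZMod.castHom (dvd_mul_right v u) (ZMod v)) z = p.1 + p.2 then 1 else 0 := by
          simp only [hrws]
          exact (key v u _ z (fun j => 3 * j) hbij3).trans
            (by rw [map_add, pi_phi, pi_phi])
        have e2 : (∑ j : ZMod u, if z = -((((p.1.val : ℕ) : ZMod (v * u)) + psiH v u j)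
              + (((p.2.val : ℕ) : ZMod (v * u)) + psiH v u (2 * j))) then (1 : ℕ) else 0)
            = if (ZMod.castHom (dvd_mul_right v u) (ZMod v)) z = -(p.1 + p.2) then 1 else 0 := by
          simp only [hrws]
          exact (key_neg v u _ z (fun j => 3 * j) hbij3).trans
            (by rw [map_add, pi_phi, pi_phi])
        have e3 : (∑ j : ZMod u, if z = (((p.1.val : ℕ) : ZMod (v * u)) + psiH v u j)
              - (((p.2.val : ℕ) : ZMod (v * u)) + psiH v u (2 * j)) then (1 : ℕ) else 0)
            = if (ZMod.castHom (dvd_mul_right v u) (ZMod v)) z = p.1 - p.2 then 1 else 0 := by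
          simp only [hrwd]
          exact (key v u _ z (fun j => -j) hbijneg).trans
            (by rw [map_sub, pi_phi, pi_phi])
        have e4 : (∑ j : ZMod u, if z = -((((p.1.val : ℕ) : ZMod (v * u)) + psiH v u j)
              - (((p.2.val : ℕ) : ZMod (v * u)) + psiH v u (2 * j))) then (1 : ℕ) else 0)
            = if (ZMod.castHom (dvd_mul_right v u) (ZMod v)) z = -(p.1 - p.2) then 1 else 0 := by
          simp only [hrwd]
          exact (key_neg v u _ z (fun j => -j) hbijneg).trans
            (by rw [map_sub, pi_phi, pi_phi])
        simp only [gTwo, count_quad]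
        rw [Finset.sum_add_distrib, Finset.sum_add_distrib, Finset.sum_add_distrib,
          e1, e2, e3, e4]
      rw [Finset.sum_congr rfl hterm]
      have hc : Multiset.count ((ZMod.castHom (dvd_mul_right v u) (ZMod v)) z)
          (Sv.val.bind fun p =>
            ({p.1 + p.2, -(p.1 + p.2), p.1 - p.2, -(p.1 - p.2)} : Multiset (ZMod v)))
          = ∑ p ∈ Sv, Multiset.count ((ZMod.castHom (dvd_mul_right v u) (ZMod v)) z)
              ({p.1 + p.2, -(p.1 + p.2), p.1 - p.2, -(p.1 - p.2)} : Multiset (ZMod v)) :=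
        count_bind_finset _ _ _
      rw [← hc, hSv2']
      exact ite_congr_all _ _ Set.mem_singleton_iff _ _
    rw [hB]
    by_cases h0 : (ZMod.castHom (dvd_mul_right v u) (ZMod v)) z = 0
    · obtain ⟨w, rfl⟩ := psi_surj v u z h0
      rw [if_pos h0]
      have hA : (∑ p ∈ Su, Multiset.count (psiH v u w)
            (({(gOne v u p).1 + (gOne v u p).2, -((gOne v u p).1 + (gOne v u p).2),
              (gOne v u p).1 - (gOne v u p).2,
              -((gOne v u p).1 - (gOne v u p).2)} : Multiset (ZMod (v * u)))))
          = if w ∈ ({0, β, -β} : Set (ZMod u)) then 0 else 1 := by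
        have hterm2 : ∀ p ∈ Su, Multiset.count (psiH v u w)
            (({(gOne v u p).1 + (gOne v u p).2, -((gOne v u p).1 + (gOne v u p).2),
              (gOne v u p).1 - (gOne v u p).2,
              -((gOne v u p).1 - (gOne v u p).2)} : Multiset (ZMod (v * u))))
            = Multiset.count w
                ({p.1 + p.2, -(p.1 + p.2), p.1 - p.2, -(p.1 - p.2)} : Multiset (ZMod u)) := by
          intro p _
          simp only [gOne, count_quad, ← map_add (psiH v u), ← map_sub (psiH v u),
            ← map_neg (psiH v u), (psi_inj v u).eq_iff]
        rw [Finset.sum_congr rfl hterm2]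
        have hc2 : Multiset.count w
            (Su.val.bind fun p =>
              ({p.1 + p.2, -(p.1 + p.2), p.1 - p.2, -(p.1 - p.2)} : Multiset (ZMod u)))
            = ∑ p ∈ Su, Multiset.count w
                ({p.1 + p.2, -(p.1 + p.2), p.1 - p.2, -(p.1 - p.2)} : Multiset (ZMod u)) :=
          count_bind_finset _ _ _
        rw [← hc2, hSu2']
      rw [hA, add_zero]
      have hmem : (psiH v u w ∈ ({0, psiH v u β, -psiH v u β} : Set (ZMod (v * u))))
          ↔ (w ∈ ({0, β, -β} : Set (ZMod u))) := by
        simp only [Set.mem_insert_iff, Set.mem_singleton_iff]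
        rw [show (0 : ZMod (v * u)) = psiH v u 0 from (map_zero _).symm,
          ← map_neg (psiH v u) β]
        simp only [(psi_inj v u).eq_iff]
      exact ite_congr_all _ _ hmem.symm _ _
    · rw [if_neg h0]
      have hA0 : (∑ p ∈ Su, Multiset.count z
            (({(gOne v u p).1 + (gOne v u p).2, -((gOne v u p).1 + (gOne v u p).2),
              (gOne v u p).1 - (gOne v u p).2,
              -((gOne v u p).1 - (gOne v u p).2)} : Multiset (ZMod (v * u))))) = 0 := by
        refine Finset.sum_eq_zero ?_
        intro p _
        simp only [gOne]
        rw [count_quad,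
          if_neg (fun h => h0 (by rw [h, map_add, pi_psi, pi_psi, add_zero])),
          if_neg (fun h => h0 (by rw [h, map_neg, map_add, pi_psi, pi_psi, add_zero, neg_zero])),
          if_neg (fun h => h0 (by rw [h, map_sub, pi_psi, pi_psi, sub_zero])),
          if_neg (fun h => h0 (by rw [h, map_neg, map_sub, pi_psi, pi_psi, sub_zero, neg_zero]))]
        rfl
      rw [hA0, zero_add]
      have hnm : ¬ (z ∈ ({0, psiH v u β, -psiH v u β} : Set (ZMod (v * u)))) := by
        intro hmem
        simp only [Set.mem_insert_iff, Set.mem_singleton_iff] at hmem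
        rcases hmem with h | h | h
        · exact h0 (by rw [h, map_zero])
        · exact h0 (by rw [h]; exact pi_psi v u β)
        · exact h0 (by rw [h, map_neg, pi_psi, neg_zero])
      exact (if_neg hnm).symm
end

section
/- Let p ≡ 7 (mod 8) be a prime and let √2 denote a square root of 2 in Z_p (which exists since 2 is a quadratic residue modulo p). Set θ = 1 + √2. If the image of θ generates the quotient group Z_p^*/{1,−1} (equivalently, every nonzero element of Z_p equals ±θ^i for some i), then there exists an APS(p, 1, θ−1). -/
open scoped Classical

/-! Put `θ = 1 + r`. As `p ≡ 3 (mod 4)`, `(p - 1) / 2 = 2m + 1` is odd and `θ ^ (2m + 1) = ±1`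
by Euler's criterion, so the elements `≠ 0, ±1` are exactly the `±θ ^ i` with `1 ≤ i ≤ 2m`.
These are the coordinates of the `m` pairs `(θ ^ (2j+1), θ ^ (2j+2))`, `j < m`. Since
`θ ^ k + θ ^ (k+1) = r θ ^ (k+1)` and `θ ^ k - θ ^ (k+1) = -r θ ^ k`, the sums and differences
are `r` times the coordinates, hence cover everything except `0, ±r`. As `4m + 3 = p`, covering
is exact covering. -/

theorem Multiset.count_eq_ite_of_forall_notMem_mem {α : Type*} [Fintype α] [DecidableEq α]
    (B : Finset α) {M : Multiset α} (hcard : card M + B.card ≤ Fintype.card α)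
    (hcov : ∀ z ∉ B, z ∈ M) (z : α) : M.count z = if z ∈ B then 0 else 1 := by
  have hle : (Finset.univ \ B).val ≤ M :=
    (Multiset.le_iff_subset (Finset.univ \ B).nodup).2 fun z hz ↦
      hcov z (Finset.mem_sdiff.1 hz).2
  have hM : (Finset.univ \ B).val = M := by
    refine Multiset.eq_of_le_of_card_le hle ?_
    rw [Finset.card_val, Finset.card_univ_sdiff]
    omega
  rw [← hM, Multiset.count_eq_of_nodup (Finset.univ \ B).nodup]
  simp only [Finset.mem_val, Finset.mem_sdiff, Finset.mem_univ, true_and]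
  by_cases hz : z ∈ B <;> simp [hz]

theorem isPPS_of_forall_notMem {G : Type*} [AddCommGroup G] [Fintype G] [DecidableEq G]
    (A₁ A₂ : Finset G) (S : Finset (G × G))
    (hcard₁ : 4 * S.card + A₁.card ≤ Fintype.card G)
    (hcard₂ : 4 * S.card + A₂.card ≤ Fintype.card G)
    (hcov₁ : ∀ z ∉ A₁, ∃ q ∈ S, z ∈ ({q.1, -q.1, q.2, -q.2} : Multiset G))
    (hcov₂ : ∀ z ∉ A₂, ∃ q ∈ S,
      z ∈ ({q.1 + q.2, -(q.1 + q.2), q.1 - q.2, -(q.1 - q.2)} : Multiset G)) :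
    IsPPS (A₁ : Set G) A₂ S := by
  constructor <;> intro z <;> simp only [Finset.mem_coe]
  · convert Multiset.count_eq_ite_of_forall_notMem_mem A₁ (by simp; omega)
      (fun z hz ↦ Multiset.mem_bind.2 (hcov₁ z hz)) z
  · convert Multiset.count_eq_ite_of_forall_notMem_mem A₂ (by simp; omega)
      (fun z hz ↦ Multiset.mem_bind.2 (hcov₂ z hz)) z

theorem pow_eq_pow_mod_or_eq_neg {M : Type*} [Monoid M] [HasDistribNeg M] {θ : M} {n : ℕ}
    (h : θ ^ n = 1 ∨ θ ^ n = -1) (i : ℕ) : θ ^ i = θ ^ (i % n) ∨ θ ^ i = -θ ^ (i % n) := by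
  have hdecomp : θ ^ i = (θ ^ n) ^ (i / n) * θ ^ (i % n) := by
    rw [← pow_mul, ← pow_add, Nat.div_add_mod]
  rcases h with h | h
  · simp [hdecomp, h]
  · rcases neg_one_pow_eq_or M (i / n) with h' | h' <;> simp [hdecomp, h, h']

namespace ZMod

variable {p : ℕ} [Fact p.Prime] {θ : ZMod p}

theorem exists_pos_lt_half_of_forall_eq_pow (hθ : θ ≠ 0)
    (hgen : ∀ x : ZMod p, x ≠ 0 → ∃ i : ℕ, x = θ ^ i ∨ x = -θ ^ i)
    {x : ZMod p} (h₀ : x ≠ 0) (h₁ : x ≠ 1) (hneg : x ≠ -1) :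
    ∃ i, 0 < i ∧ i < p / 2 ∧ (x = θ ^ i ∨ x = -θ ^ i) := by
  obtain ⟨i, hi⟩ := hgen x h₀
  have hp : 0 < p / 2 := Nat.div_pos (Fact.out : p.Prime).two_le two_pos
  have hmod := pow_eq_pow_mod_or_eq_neg (pow_div_two_eq_neg_one_or_one p hθ) i
  have hx : x = θ ^ (i % (p / 2)) ∨ x = -θ ^ (i % (p / 2)) := by
    rcases hi with rfl | rfl <;> rcases hmod with h | h <;> simp [h]
  refine ⟨i % (p / 2), Nat.pos_of_ne_zero fun h0 ↦ ?_, Nat.mod_lt _ hp, hx⟩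
  rcases hx with hx | hx <;> simp [h0] at hx <;> contradiction

theorem exists_lt_mem_of_forall_eq_pow (hp : p % 4 = 3) (hθ : θ ≠ 0)
    (hgen : ∀ x : ZMod p, x ≠ 0 → ∃ i : ℕ, x = θ ^ i ∨ x = -θ ^ i)
    (x : ZMod p) (h₀ : x ≠ 0) (h₁ : x ≠ 1) (hneg : x ≠ -1) :
    ∃ j < p / 4, x ∈ ({θ ^ (2 * j + 1), -θ ^ (2 * j + 1), θ ^ (2 * j + 1 + 1),
      -θ ^ (2 * j + 1 + 1)} : Multiset (ZMod p)) := by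
  obtain ⟨i, hi₀, hi, hx⟩ := exists_pos_lt_half_of_forall_eq_pow hθ hgen h₀ h₁ hneg
  refine ⟨(i - 1) / 2, by omega, ?_⟩
  rcases Nat.even_or_odd i with ⟨k, rfl⟩ | ⟨k, rfl⟩
  · rw [show (k + k - 1) / 2 = k - 1 by omega, show 2 * (k - 1) + 1 + 1 = k + k by omega]
    rcases hx with rfl | rfl <;> simp
  · rw [show (2 * k + 1 - 1) / 2 = k by omega]
    rcases hx with rfl | rfl <;> simp

end ZMod

theorem mul_mem_sum_diff_of_sq_eq_two {R : Type*} [CommRing R] {r w : R} (hr : r ^ 2 = 2)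
    (k : ℕ) (hw : w ∈ ({(1 + r) ^ k, -(1 + r) ^ k, (1 + r) ^ (k + 1), -(1 + r) ^ (k + 1)} :
      Multiset R)) :
    r * w ∈ ({(1 + r) ^ k + (1 + r) ^ (k + 1), -((1 + r) ^ k + (1 + r) ^ (k + 1)),
      (1 + r) ^ k - (1 + r) ^ (k + 1), -((1 + r) ^ k - (1 + r) ^ (k + 1))} : Multiset R) := by
  have hsum : (1 + r) ^ k + (1 + r) ^ (k + 1) = r * (1 + r) ^ (k + 1) := by
    linear_combination (-(1 + r) ^ k) * hr
  have hdiff : (1 + r) ^ k - (1 + r) ^ (k + 1) = -(r * (1 + r) ^ k) := by ring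
  rw [hsum, hdiff]
  simp only [Multiset.insert_eq_cons, Multiset.mem_cons, Multiset.mem_singleton] at hw ⊢
  rcases hw with rfl | rfl | rfl | rfl <;> simp

theorem stmt9 (p : ℕ) (hp : Nat.Prime p) (hp8 : p % 8 = 7)
    (r : ZMod p) (hr : r ^ 2 = 2)
    (hgen : ∀ x : ZMod p, x ≠ 0 → ∃ i : ℕ, x = (1 + r) ^ i ∨ x = -((1 + r) ^ i)) :
    ∃ S : Finset (ZMod p × ZMod p), IsAPS p 1 ((1 + r) - 1) S := by
  have := Fact.mk hp
  have h2 : (2 : ZMod p) ≠ 0 := fun h ↦ by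
    have := Nat.le_of_dvd two_pos ((ZMod.natCast_eq_zero_iff 2 p).1 (by exact_mod_cast h))
    omega
  have hr₀ : r ≠ 0 := by rintro rfl; exact h2 (by simpa using hr.symm)
  have hθ : 1 + r ≠ 0 := left_ne_zero_of_mul_eq_one (b := r - 1) (by linear_combination hr)
  have hcov := ZMod.exists_lt_mem_of_forall_eq_pow (by omega) hθ hgen
  set S : Finset (ZMod p × ZMod p) := (Finset.range (p / 4)).image fun j ↦
    ((1 + r) ^ (2 * j + 1), (1 + r) ^ (2 * j + 1 + 1))
  have hcard (B : Finset (ZMod p)) (hB : B.card ≤ 3) :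
      4 * S.card + B.card ≤ Fintype.card (ZMod p) := by
    have : S.card ≤ p / 4 := Finset.card_image_le.trans_eq (Finset.card_range _)
    rw [ZMod.card]
    omega
  refine ⟨S, ?_⟩
  rw [IsAPS, add_sub_cancel_left, ← Finset.coe_pair, ← Finset.coe_insert, ← Finset.coe_pair,
    ← Finset.coe_insert]
  refine isPPS_of_forall_notMem _ _ S (hcard _ Finset.card_le_three) (hcard _ Finset.card_le_three)
    (fun z hz ↦ ?_) (fun z hz ↦ ?_)
  · simp only [Finset.mem_insert, Finset.mem_singleton, not_or] at hz
    obtain ⟨j, hj, hmem⟩ := hcov z hz.1 hz.2.1 hz.2.2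
    exact ⟨_, Finset.mem_image_of_mem _ (Finset.mem_range.2 hj), hmem⟩
  · simp only [Finset.mem_insert, Finset.mem_singleton, not_or] at hz
    obtain ⟨j, hj, hmem⟩ := hcov (z / r) (div_ne_zero hz.1 hr₀)
      (fun h ↦ hz.2.1 (by simpa using (div_eq_iff hr₀).1 h))
      (fun h ↦ hz.2.2 (by simpa using (div_eq_iff hr₀).1 h))
    refine ⟨_, Finset.mem_image_of_mem _ (Finset.mem_range.2 hj), ?_⟩
    simpa [mul_div_cancel₀ _ hr₀] using mul_mem_sum_diff_of_sq_eq_two hr _ hmem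
end

section
/- Let p ≡ 7 (mod 8) be a prime, let √2 denote a square root of 2 in Z_p, and suppose the image of θ = 1 + √2 generates the quotient group Z_p^*/{1,−1}. Then for nonzero α, β ∈ Z_p, an APS(p,α,β) exists if and only if 2α² − β² = 0 in Z_p. -/
open scoped Classical

section Aux

private lemma ite_irrel_s10 {P : Prop} {h1 h2 : Decidable P} (a b : ℕ) :
    @ite ℕ P h1 a b = @ite ℕ P h2 a b := by
  congr

variable {p : ℕ} [Fact (Nat.Prime p)]

private lemma aux_two_ne (hp8 : p % 8 = 7) : (2 : ZMod p) ≠ 0 := by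
  intro h
  have h2 : ((2:ℕ) : ZMod p) = 0 := by exact_mod_cast h
  have := (ZMod.natCast_eq_zero_iff 2 p).mp h2
  have := Nat.le_of_dvd (by norm_num) this
  omega

private lemma aux_three_ne (hp8 : p % 8 = 7) : (3 : ZMod p) ≠ 0 := by
  intro h
  have h2 : ((3:ℕ) : ZMod p) = 0 := by exact_mod_cast h
  have := (ZMod.natCast_eq_zero_iff 3 p).mp h2
  have := Nat.le_of_dvd (by norm_num) this
  omega

private lemma aux_sum_sq_s10 (hp8 : p % 8 = 7) : ∑ z : ZMod p, z ^ 2 = 0 := by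
  haveI : NeZero p := ⟨by omega⟩
  have h2 : (2:ZMod p) ≠ 0 := aux_two_ne hp8
  have hbij : Function.Bijective (fun z : ZMod p => 2 * z) :=
    Finite.injective_iff_bijective.mp (mul_right_injective₀ h2)
  have h1 : ∑ x : ZMod p, (2*x)^2 = ∑ z : ZMod p, z^2 :=
    Fintype.sum_bijective _ hbij _ _ (fun x => rfl)
  have h4 : ∑ x : ZMod p, (2*x)^2 = 4 * ∑ x : ZMod p, x^2 := by
    rw [Finset.mul_sum]
    exact Finset.sum_congr rfl (fun x _ => by ring)
  have h3 : (3:ZMod p) * ∑ x : ZMod p, x^2 = 0 := by linear_combination h1 - h4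
  rcases mul_eq_zero.mp h3 with h | h
  · exact absurd h (aux_three_ne hp8)
  · exact h

private lemma aux_sign_mul {a b : ZMod p} (ha : a = 1 ∨ a = -1) (hb : b = 1 ∨ b = -1) :
    a * b = 1 ∨ a * b = -1 := by
  rcases ha with h|h <;> rcases hb with h'|h' <;> rw [h, h'] <;> [left; right; right; left] <;> ring

private lemma aux_sign_pow {c : ZMod p} (hc : c = 1 ∨ c = -1) (q : ℕ) :
    c ^ q = 1 ∨ c ^ q = -1 := by
  rcases hc with h|h
  · left; rw [h, one_pow]
  · subst h
    rcases Nat.even_or_odd q with hq|hq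
    · left; exact hq.neg_one_pow
    · right; exact hq.neg_one_pow

private lemma aux_theta_ne (hp8 : p % 8 = 7) (r : ZMod p) (hr : r ^ 2 = 2) :
    (1 + r : ZMod p) ≠ 0 := by
  intro h
  have h2 : (2:ZMod p) = 1 := by linear_combination (r - 1) * h - hr
  exact aux_two_ne hp8 (by linear_combination 2 * h2)

private lemma aux_reduce (r : ZMod p) (d : ℕ) (hd0 : 0 < d) (c : ZMod p)
    (hc : c = 1 ∨ c = -1) (hdc : (1+r)^d = c) (x : ZMod p) (i : ℕ)
    (hi : x = (1+r)^i ∨ x = -((1+r)^i)) :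
    ∃ e < d, ∃ a : ZMod p, (a = 1 ∨ a = -1) ∧ x = a * (1+r)^e := by
  have hdecomp : (1+r) ^ i = c ^ (i / d) * (1+r) ^ (i % d) := by
    conv_lhs => rw [← Nat.div_add_mod i d]
    rw [pow_add, pow_mul, hdc]
  refine ⟨i % d, Nat.mod_lt _ hd0, ?_⟩
  rcases aux_sign_pow hc (i / d) with h'|h' <;> rcases hi with h|h
  · exact ⟨1, Or.inl rfl, by rw [h, hdecomp, h']; try ring⟩
  · exact ⟨-1, Or.inr rfl, by rw [h, hdecomp, h']; try ring⟩
  · exact ⟨-1, Or.inr rfl, by rw [h, hdecomp, h']; try ring⟩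
  · exact ⟨1, Or.inl rfl, by rw [h, hdecomp, h']; try ring⟩

private lemma aux_card (hp8 : p % 8 = 7) (r : ZMod p) (hr : r ^ 2 = 2)
    (hgen : ∀ x : ZMod p, x ≠ 0 → ∃ i : ℕ, x = (1 + r) ^ i ∨ x = -((1 + r) ^ i))
    (d : ℕ) (hd0 : 0 < d) (hdlt : 2*d < p - 1) (c : ZMod p)
    (hc : c = 1 ∨ c = -1) (hdc : (1+r)^d = c) : False := by
  haveI : NeZero p := ⟨by omega⟩
  have hsub : (Finset.univ.erase (0:ZMod p)) ⊆
      (Finset.range d ×ˢ ({(1:ZMod p), -1} : Finset (ZMod p))).image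
        (fun q => q.2 * (1+r) ^ q.1) := by
    intro x hx
    obtain ⟨i, hi⟩ := hgen x (Finset.mem_erase.mp hx).1
    obtain ⟨e, he, a, ha, hxe⟩ := aux_reduce r d hd0 c hc hdc x i hi
    refine Finset.mem_image.mpr ⟨(e, a), ?_, hxe.symm⟩
    refine Finset.mem_product.mpr ⟨Finset.mem_range.mpr he, ?_⟩
    rcases ha with h|h <;> simp [h]
  have h1 : (Finset.univ.erase (0:ZMod p)).card = p - 1 := by
    rw [Finset.card_erase_of_mem (Finset.mem_univ _), Finset.card_univ, ZMod.card]
  have h2 := Finset.card_le_card hsub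
  have h3 := Finset.card_image_le (f := fun q : ℕ × ZMod p => q.2 * (1+r) ^ q.1)
    (s := Finset.range d ×ˢ ({(1:ZMod p), -1} : Finset (ZMod p)))
  have h5 : ({(1:ZMod p), -1} : Finset (ZMod p)).card ≤ 2 :=
    le_trans (Finset.card_insert_le _ _) (by simp)
  have h4 : (Finset.range d ×ˢ ({(1:ZMod p), -1} : Finset (ZMod p))).card ≤ d * 2 := by
    rw [Finset.card_product, Finset.card_range]
    exact Nat.mul_le_mul (le_refl d) h5
  omega

private lemma aux_inj (hp8 : p % 8 = 7) (r : ZMod p) (hr : r ^ 2 = 2)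
    (hgen : ∀ x : ZMod p, x ≠ 0 → ∃ i : ℕ, x = (1 + r) ^ i ∨ x = -((1 + r) ^ i)) :
    ∀ i j : ℕ, i < (p-1)/2 → j < (p-1)/2 → ∀ a b : ZMod p,
      (a = 1 ∨ a = -1) → (b = 1 ∨ b = -1) → a * (1+r)^i = b * (1+r)^j → a = b ∧ i = j := by
  have hθ0 : (1+r : ZMod p) ≠ 0 := aux_theta_ne hp8 r hr
  have main : ∀ i j : ℕ, i ≤ j → j < (p-1)/2 → ∀ a b : ZMod p,
      (a = 1 ∨ a = -1) → (b = 1 ∨ b = -1) → a * (1+r)^i = b * (1+r)^j → a = b ∧ i = j := by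
    intro i j hij hj a b ha hb heq
    have hpne : (1+r : ZMod p)^i ≠ 0 := pow_ne_zero _ hθ0
    have heq2 : a = b * (1+r)^(j-i) := by
      apply mul_right_cancel₀ hpne
      rw [heq, mul_assoc, ← pow_add]
      have h' : j - i + i = j := by omega
      rw [h']
    by_cases hd : j - i = 0
    · have hij' : i = j := by omega
      subst hij'
      refine ⟨?_, rfl⟩
      rw [hd] at heq2
      rw [heq2, pow_zero, mul_one]
    · exfalso
      have hbb : b * b = 1 := by rcases hb with h|h <;> rw [h] <;> ring
      have hpow : (1+r : ZMod p)^(j-i) = b * a := by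
        rw [heq2, ← mul_assoc, hbb, one_mul]
      exact aux_card hp8 r hr hgen (j-i) (by omega) (by omega) (b*a)
        (aux_sign_mul hb ha) hpow
  intro i j hi hj a b ha hb heq
  rcases le_total i j with h|h
  · exact main i j h hj a b ha hb heq
  · obtain ⟨h1, h2⟩ := main j i h hi b a hb ha heq.symm
    exact ⟨h1.symm, h2.symm⟩

private lemma aux_surj (hp8 : p % 8 = 7) (r : ZMod p) (hr : r ^ 2 = 2)
    (hgen : ∀ x : ZMod p, x ≠ 0 → ∃ i : ℕ, x = (1 + r) ^ i ∨ x = -((1 + r) ^ i))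
    (x : ZMod p) (hx : x ≠ 0) :
    ∃ e < (p-1)/2, ∃ a : ZMod p, (a = 1 ∨ a = -1) ∧ x = a * (1+r)^e := by
  have hθ0 : (1+r : ZMod p) ≠ 0 := aux_theta_ne hp8 r hr
  have hsq : (1+r : ZMod p)^((p-1)/2) * (1+r)^((p-1)/2) = 1 := by
    rw [← pow_add]
    have h2 : (p-1)/2 + (p-1)/2 = p - 1 := by omega
    rw [h2]
    exact ZMod.pow_card_sub_one_eq_one hθ0
  obtain ⟨i, hi⟩ := hgen x hx
  exact aux_reduce r ((p-1)/2) (by omega) _ (mul_self_eq_one_iff.mp hsq) rfl x i hi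

private lemma aux_cover (k : ℕ) (hk : p = 8*k+7)
    (r : ZMod p) (hr : r ^ 2 = 2)
    (hgen : ∀ x : ZMod p, x ≠ 0 → ∃ i : ℕ, x = (1 + r) ^ i ∨ x = -((1 + r) ^ i))
    (γ : ZMod p) (hγ : γ ≠ 0) (z : ZMod p) :
    ((Finset.range (2*k+1)).val.bind (fun j =>
      ({γ*(1+r)^(2*j+1), -(γ*(1+r)^(2*j+1)), γ*(1+r)^(2*j+2), -(γ*(1+r)^(2*j+2))} :
        Multiset (ZMod p)))).count z
    = if z ∈ ({0, γ, -γ} : Set (ZMod p)) then 0 else 1 := by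
  have hp8 : p % 8 = 7 := by omega
  have hθ0 : (1+r : ZMod p) ≠ 0 := aux_theta_ne hp8 r hr
  have hone : (1:ZMod p) ≠ -1 := fun h => aux_two_ne hp8 (by linear_combination h)
  have hkey : ∀ (ε η : ZMod p), (ε = 1 ∨ ε = -1) → (η = 1 ∨ η = -1) →
      ∀ e f : ℕ, e < 4*k+3 → f < 4*k+3 →
      (ε * (γ * (1+r)^e) = η * (γ * (1+r)^f) ↔ (ε = η ∧ e = f)) := by
    intro ε η hε hη e f he hf
    constructor
    · intro h
      have h' : (ε * (1+r)^e) * γ = (η * (1+r)^f) * γ := by linear_combination h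
      exact aux_inj hp8 r hr hgen e f (by omega) (by omega) ε η hε hη
        (mul_right_cancel₀ hγ h')
    · rintro ⟨h1, h2⟩; rw [h1, h2]
  by_cases hz : z ∈ ({0, γ, -γ} : Set (ZMod p))
  · rw [if_pos hz, Multiset.count_eq_zero]
    intro hmem
    obtain ⟨j, hj, hzj⟩ := Multiset.mem_bind.mp hmem
    have hjlt : j < 2*k+1 := Finset.mem_range.mp (Finset.mem_val.mp hj)
    have hz' : ∃ ε : ZMod p, (ε = 1 ∨ ε = -1) ∧
        ∃ e, (0 < e ∧ e < 4*k+3) ∧ z = ε * (γ * (1+r)^e) := by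
      simp only [Multiset.insert_eq_cons, Multiset.mem_cons, Multiset.mem_singleton] at hzj
      rcases hzj with h|h|h|h
      · exact ⟨1, Or.inl rfl, 2*j+1, ⟨by omega, by omega⟩, by rw [one_mul]; exact h⟩
      · exact ⟨-1, Or.inr rfl, 2*j+1, ⟨by omega, by omega⟩, by rw [neg_one_mul, ← h]⟩
      · exact ⟨1, Or.inl rfl, 2*j+2, ⟨by omega, by omega⟩, by rw [one_mul]; exact h⟩
      · exact ⟨-1, Or.inr rfl, 2*j+2, ⟨by omega, by omega⟩, by rw [neg_one_mul, ← h]⟩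
    obtain ⟨ε, hε, e, ⟨he0, helt⟩, hze⟩ := hz'
    simp only [Set.mem_insert_iff, Set.mem_singleton_iff] at hz
    rcases hz with h0|h0|h0
    · rw [h0] at hze
      have hne : ε * (γ * (1+r)^e) ≠ 0 := by
        rcases hε with h|h <;> rw [h] <;>
          simp [hγ, pow_ne_zero, hθ0]
      exact hne hze.symm
    · have h' : ε * (γ * (1+r)^e) = 1 * (γ * (1+r)^0) := by
        rw [one_mul, pow_zero, mul_one, ← hze, h0]
      have := ((hkey ε 1 hε (Or.inl rfl) e 0 helt (by omega)).mp h').2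
      omega
    · have h' : ε * (γ * (1+r)^e) = (-1) * (γ * (1+r)^0) := by
        rw [neg_one_mul, pow_zero, mul_one, ← hze, h0]
      have := ((hkey ε (-1) hε (Or.inr rfl) e 0 helt (by omega)).mp h').2
      omega
  · rw [if_neg hz]
    have hz0 : z ≠ 0 := fun h => hz (by rw [h]; exact Set.mem_insert _ _)
    obtain ⟨i, hilt', a, ha, hza'⟩ := aux_surj hp8 r hr hgen (γ⁻¹ * z)
      (mul_ne_zero (inv_ne_zero hγ) hz0)
    have hilt : i < 4*k+3 := by omega
    have hz' : z = a * (γ * (1+r)^i) := by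
      have h := congrArg (fun t => γ * t) hza'
      rw [← mul_assoc, mul_inv_cancel₀ hγ, one_mul] at h
      rw [h]; ring
    have hi0 : i ≠ 0 := by
      intro h
      rcases ha with h'|h'
      · exact hz (by rw [hz', h, h']; simp)
      · exact hz (by rw [hz', h, h']; simp)
    set j₀ := (i-1)/2 with hj₀def
    have hij : i = 2*j₀+1 ∨ i = 2*j₀+2 := by omega
    have hj₀lt : j₀ < 2*k+1 := by omega
    have hcond1 : ∀ e, e < 4*k+3 → ((z = γ*(1+r)^e) ↔ (a = 1 ∧ i = e)) := by
      intro e he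
      rw [hz']
      constructor
      · intro h
        exact (hkey a 1 ha (Or.inl rfl) i e hilt he).mp (by rw [one_mul]; exact h)
      · rintro ⟨h1, h2⟩; rw [h1, h2, one_mul]
    have hcond2 : ∀ e, e < 4*k+3 → ((z = -(γ*(1+r)^e)) ↔ (a = -1 ∧ i = e)) := by
      intro e he
      rw [hz']
      constructor
      · intro h
        exact (hkey a (-1) ha (Or.inr rfl) i e hilt he).mp (by rw [neg_one_mul]; exact h)
      · rintro ⟨h1, h2⟩; rw [h1, h2, neg_one_mul]
    rw [Multiset.count_bind]
    have hsum : (Multiset.map (fun j => Multiset.count z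
        ({γ*(1+r)^(2*j+1), -(γ*(1+r)^(2*j+1)), γ*(1+r)^(2*j+2), -(γ*(1+r)^(2*j+2))} :
          Multiset (ZMod p))) (Finset.range (2*k+1)).val).sum
        = ∑ j ∈ Finset.range (2*k+1), Multiset.count z
        ({γ*(1+r)^(2*j+1), -(γ*(1+r)^(2*j+1)), γ*(1+r)^(2*j+2), -(γ*(1+r)^(2*j+2))} :
          Multiset (ZMod p)) := rfl
    rw [hsum]
    refine (Finset.sum_eq_single j₀ ?_ ?_).trans ?_
    · intro b hb hbj
      have hblt : b < 2*k+1 := Finset.mem_range.mp hb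
      simp only [Multiset.insert_eq_cons, Multiset.count_cons, Multiset.count_singleton]
      simp only [hcond1 (2*b+1) (by omega), hcond1 (2*b+2) (by omega),
        hcond2 (2*b+1) (by omega), hcond2 (2*b+2) (by omega)]
      have h1 : i ≠ 2*b+1 := by omega
      have h2 : i ≠ 2*b+2 := by omega
      simp [h1, h2]
    · intro h; exact absurd (Finset.mem_range.mpr hj₀lt) h
    · simp only [Multiset.insert_eq_cons, Multiset.count_cons, Multiset.count_singleton]
      simp only [hcond1 (2*j₀+1) (by omega), hcond1 (2*j₀+2) (by omega),
        hcond2 (2*j₀+1) (by omega), hcond2 (2*j₀+2) (by omega)]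
      rcases ha with h|h <;> rcases hij with h'|h' <;>
        simp [h, h', hone, Ne.symm hone]

end Aux

theorem stmt10 (p : ℕ) (hp : Nat.Prime p) (hp8 : p % 8 = 7)
    (r : ZMod p) (hr : r ^ 2 = 2)
    (hgen : ∀ x : ZMod p, x ≠ 0 → ∃ i : ℕ, x = (1 + r) ^ i ∨ x = -((1 + r) ^ i))
    (α β : ZMod p) (hα : α ≠ 0) (hβ : β ≠ 0) :
    (∃ S : Finset (ZMod p × ZMod p), IsAPS p α β S) ↔ 2 * α ^ 2 - β ^ 2 = 0 := by
  haveI : Fact (Nat.Prime p) := ⟨hp⟩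
  haveI : NeZero p := ⟨by omega⟩
  obtain ⟨k, hk⟩ : ∃ k, p = 8*k+7 := ⟨p/8, by omega⟩
  have h2ne : (2:ZMod p) ≠ 0 := aux_two_ne hp8
  have hdec : (fun a b => Classical.propDecidable (a = b)) = ZMod.decidableEq p := by
    funext a b; exact Subsingleton.elim _ _
  constructor
  · rintro ⟨S, h1, h2⟩
    rw [hdec] at h1 h2
    have hsum : ∀ (f : ZMod p × ZMod p → Multiset (ZMod p)) (δ : ZMod p), δ ≠ 0 →
        (∀ z, (S.val.bind f).count z = if z ∈ ({0, δ, -δ} : Set (ZMod p)) then 0 else 1) →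
        ((S.val.bind f).map (fun z => z^2)).sum = -(2*δ^2) := by
      intro f δ hδ hcount
      have hδ2 : δ ∉ ({-δ} : Finset (ZMod p)) := by
        simp only [Finset.mem_singleton]
        intro h
        have : (2:ZMod p) * δ = 0 := by linear_combination h
        rcases mul_eq_zero.mp this with h'|h'
        · exact h2ne h'
        · exact hδ h'
      have h0mem : (0:ZMod p) ∉ ({δ, -δ} : Finset (ZMod p)) := by
        simp only [Finset.mem_insert, Finset.mem_singleton]
        push_neg
        exact ⟨fun h => hδ h.symm, fun h => hδ (by linear_combination h)⟩
      have hmulti : S.val.bind f = (Finset.univ \ ({0, δ, -δ} : Finset (ZMod p))).val := by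
        refine Multiset.ext.mpr fun z => ?_
        rw [hcount z]
        by_cases hz : z ∈ ({0, δ, -δ} : Set (ZMod p))
        · rw [if_pos hz, eq_comm, Multiset.count_eq_zero]
          intro hmem
          have := Finset.mem_sdiff.mp (Finset.mem_val.mp hmem)
          apply this.2
          simp only [Set.mem_insert_iff, Set.mem_singleton_iff] at hz
          simp only [Finset.mem_insert, Finset.mem_singleton]
          exact hz
        · rw [if_neg hz, eq_comm]
          apply Multiset.count_eq_one_of_mem (Finset.univ \ ({0, δ, -δ} : Finset (ZMod p))).nodup
          apply Finset.mem_val.mpr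
          refine Finset.mem_sdiff.mpr ⟨Finset.mem_univ _, ?_⟩
          intro hmem
          apply hz
          simp only [Finset.mem_insert, Finset.mem_singleton] at hmem
          simp only [Set.mem_insert_iff, Set.mem_singleton_iff]
          exact hmem
      rw [hmulti]
      have hconv : ((Finset.univ \ ({0, δ, -δ} : Finset (ZMod p))).val.map (fun z => z^2)).sum
          = ∑ z ∈ Finset.univ \ ({0, δ, -δ} : Finset (ZMod p)), z^2 := rfl
      rw [hconv, Finset.sum_sdiff_eq_sub (Finset.subset_univ _), aux_sum_sq_s10 hp8,
        Finset.sum_insert h0mem, Finset.sum_insert hδ2, Finset.sum_singleton]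
      ring
    have h1' : ∀ z, (S.val.bind fun pr => ({pr.1, -pr.1, pr.2, -pr.2} : Multiset (ZMod p))).count z
        = if z ∈ ({0, α, -α} : Set (ZMod p)) then 0 else 1 :=
      fun z => (h1 z).trans (ite_irrel_s10 _ _)
    have h2' : ∀ z, (S.val.bind fun pr => ({pr.1 + pr.2, -(pr.1 + pr.2), pr.1 - pr.2,
        -(pr.1 - pr.2)} : Multiset (ZMod p))).count z
        = if z ∈ ({0, β, -β} : Set (ZMod p)) then 0 else 1 :=
      fun z => (h2 z).trans (ite_irrel_s10 _ _)
    have e1 := hsum _ α hα h1'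
    have e2 := hsum _ β hβ h2'
    have l1 : ((S.val.bind fun pr => ({pr.1, -pr.1, pr.2, -pr.2} : Multiset (ZMod p))).map
        (fun z => z^2)).sum = ∑ pr ∈ S, (2*pr.1^2 + 2*pr.2^2) := by
      rw [Multiset.map_bind, Multiset.sum_bind]
      rw [Finset.sum_eq_multiset_sum]
      refine congrArg Multiset.sum (Multiset.map_congr rfl fun pr _ => ?_)
      simp only [Multiset.insert_eq_cons, Multiset.map_cons, Multiset.map_singleton,
        Multiset.sum_cons, Multiset.sum_singleton]
      ring
    have l2 : ((S.val.bind fun pr => ({pr.1 + pr.2, -(pr.1 + pr.2), pr.1 - pr.2,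
        -(pr.1 - pr.2)} : Multiset (ZMod p))).map (fun z => z^2)).sum
        = ∑ pr ∈ S, (4*pr.1^2 + 4*pr.2^2) := by
      rw [Multiset.map_bind, Multiset.sum_bind]
      rw [Finset.sum_eq_multiset_sum]
      refine congrArg Multiset.sum (Multiset.map_congr rfl fun pr _ => ?_)
      simp only [Multiset.insert_eq_cons, Multiset.map_cons, Multiset.map_singleton,
        Multiset.sum_cons, Multiset.sum_singleton]
      ring
    rw [l1] at e1
    rw [l2] at e2
    have e3 : ∑ pr ∈ S, ((4:ZMod p)*pr.1^2 + 4*pr.2^2)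
        = 2 * ∑ pr ∈ S, ((2:ZMod p)*pr.1^2 + 2*pr.2^2) := by
      rw [Finset.mul_sum]
      exact Finset.sum_congr rfl fun pr _ => by ring
    have hfin : (2:ZMod p) * (2*α^2 - β^2) = 0 := by linear_combination 2*e1 - e2 + e3
    rcases mul_eq_zero.mp hfin with h|h
    · exact absurd h h2ne
    · exact h
  · intro hcond
    have hrne : r ≠ 0 := fun h => h2ne (by rw [← hr, h]; ring)
    have hβ' : β = r*α ∨ β = -(r*α) := by
      have h0 : (β - r*α) * (β + r*α) = 0 := by linear_combination -hcond - α^2*hr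
      rcases mul_eq_zero.mp h0 with h|h
      · left; linear_combination h
      · right; linear_combination h
    have hset : ({0, β, -β} : Set (ZMod p)) = ({0, r*α, -(r*α)} : Set (ZMod p)) := by
      rcases hβ' with h|h <;> subst h <;> ext x <;>
        simp only [Set.mem_insert_iff, Set.mem_singleton_iff, neg_neg] <;> tauto
    set g : ℕ → ZMod p × ZMod p := fun j => (α*(1+r)^(2*j+1), α*(1+r)^(2*j+2)) with hg
    have hinj : ∀ x ∈ (Finset.range (2*k+1)).val, ∀ y ∈ (Finset.range (2*k+1)).val,
        g x = g y → x = y := by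
      intro x hx y hy h
      have hx' : x < 2*k+1 := Finset.mem_range.mp (Finset.mem_val.mp hx)
      have hy' : y < 2*k+1 := Finset.mem_range.mp (Finset.mem_val.mp hy)
      have h1 : α*(1+r)^(2*x+1) = α*(1+r)^(2*y+1) := congrArg Prod.fst h
      have h2 : (1:ZMod p)*(1+r)^(2*x+1) = 1*(1+r)^(2*y+1) := by
        rw [one_mul, one_mul]
        exact mul_left_cancel₀ hα h1
      have := aux_inj hp8 r hr hgen (2*x+1) (2*y+1) (by omega) (by omega) 1 1
        (Or.inl rfl) (Or.inl rfl) h2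
      omega
    have hSval : ((Finset.range (2*k+1)).image g).val = (Finset.range (2*k+1)).val.map g := by
      rw [Finset.image_val, Multiset.dedup_eq_self.mpr]
      exact Multiset.Nodup.map_on hinj (Finset.range (2*k+1)).nodup
    refine ⟨(Finset.range (2*k+1)).image g, ?_, ?_⟩
    · intro z
      rw [hdec]
      rw [hSval, Multiset.bind_map]
      exact (aux_cover k hk r hr hgen α hα z).trans (ite_irrel_s10 _ _)
    · intro z
      rw [hdec]
      rw [hSval, Multiset.bind_map, hset]
      have hswap : ∀ (A C : ZMod p), ({A, -A, -C, C} : Multiset (ZMod p)) = {C, -C, A, -A} := by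
        intro A C
        simp only [Multiset.insert_eq_cons]
        refine Multiset.ext.mpr fun x => ?_
        simp only [Multiset.count_cons, Multiset.count_singleton]
        ring
      have hfun : ∀ j ∈ (Finset.range (2*k+1)).val,
          ({(g j).1 + (g j).2, -((g j).1 + (g j).2), (g j).1 - (g j).2, -((g j).1 - (g j).2)} :
            Multiset (ZMod p))
          = {(r*α)*(1+r)^(2*j+1), -((r*α)*(1+r)^(2*j+1)), (r*α)*(1+r)^(2*j+2),
              -((r*α)*(1+r)^(2*j+2))} := by
        intro j _
        have e1 : (g j).1 + (g j).2 = (r*α)*(1+r)^(2*j+2) := by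
          show α*(1+r)^(2*j+1) + α*(1+r)^(2*j+2) = (r*α)*(1+r)^(2*j+2)
          rw [pow_succ (1+r) (2*j+1)]
          linear_combination (-(α*(1+r)^(2*j+1))) * hr
        have e2 : (g j).1 - (g j).2 = -((r*α)*(1+r)^(2*j+1)) := by
          show α*(1+r)^(2*j+1) - α*(1+r)^(2*j+2) = -((r*α)*(1+r)^(2*j+1))
          rw [pow_succ (1+r) (2*j+1)]
          ring
        rw [e1, e2, neg_neg]
        exact hswap _ _
      rw [Multiset.bind_congr hfun]
      exact (aux_cover k hk r hr hgen (r*α) (mul_ne_zero hrne hα) z).trans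
        (ite_irrel_s10 _ _)
end
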